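/- arXiv:2311.12277 — 10 statements merged into one kernel-verified Lean document; each statement's English description precedes it below -/
import Mathlib

section
/- Suppose R₁ and R₂ are regular dihedral permutation groups acting on a finite set Ω, and their cyclic subgroups of index 2 (which act semiregularly with two orbits on Ω) are equal as permutation groups. Then R₁ = R₂. -/
/-!
A cyclic subgroup of index 2 in a dihedral group of order `2k ≥ 6` consists of rotations, so
every `t ∈ R₁ \ C` and `s ∈ R₂ \ C` is an involution inverting `C`, and `u = t * s` centralizes
`C`. By regularity `t` and `s` interchange the two `C`-orbits, so `u ω = c ω` for some `c ∈ C`.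
Then `v = c⁻¹ * u` centralizes `C`, fixes `ω` and is inverted by `t`, hence fixes both orbits
pointwise. So `t * s ∈ C`, which puts `s` in `R₁` and `t` in `R₂`, and `Rᵢ = C ∪ t C = C ∪ s C`.
-/

open Subgroup MulAction Equiv

namespace DihedralGroup

variable {k : ℕ}

lemma exists_eq_r_of_mem (hk : 3 ≤ k) {H : Subgroup (DihedralGroup k)} [IsCyclic H]
    (hH : H.index = 2) {x : DihedralGroup k} (hx : x ∈ H) : ∃ i, x = r i := by
  have hcard : Nat.card H = k := by
    have := H.card_mul_index
    rw [hH, nat_card] at this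
    omega
  obtain ⟨g, hg⟩ := IsCyclic.exists_generator (α := H)
  obtain ⟨i, hi⟩ : ∃ i, (g : DihedralGroup k) = r i := by
    rcases hgi : (g : DihedralGroup k) with i | i
    · exact ⟨i, rfl⟩
    · have := orderOf_eq_card_of_forall_mem_zpowers hg
      rw [← Subgroup.orderOf_coe, hgi, orderOf_sr] at this
      omega
  obtain ⟨n, hn⟩ := mem_zpowers_iff.mp (hg ⟨x, hx⟩)
  exact ⟨i * n, by rw [← r_zpow, ← hi, ← Subgroup.coe_zpow, hn]⟩

lemma exists_eq_sr_of_notMem (hk : 3 ≤ k) {H : Subgroup (DihedralGroup k)} [IsCyclic H]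
    (hH : H.index = 2) {x : DihedralGroup k} (hx : x ∉ H) : ∃ i, x = sr i := by
  rcases x with j | j
  · -- `r j * sr 0 = sr (-j)` would lie in `H`, which contains only rotations.
    have hprod : r j * sr 0 ∈ H := by
      rw [mul_mem_iff_of_index_two hH]
      exact iff_of_false hx fun h ↦ by
        obtain ⟨i, hi⟩ := exists_eq_r_of_mem hk hH h
        cases hi
    obtain ⟨i, hi⟩ := exists_eq_r_of_mem hk hH hprod
    rw [r_mul_sr] at hi
    cases hi
  · exact ⟨j, rfl⟩

end DihedralGroup

lemma mul_self_eq_one_and_conj_eq_inv_of_notMem {G : Type*} [Group G] {k : ℕ} (hk : 3 ≤ k)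
    (e : G ≃* DihedralGroup k) {H : Subgroup G} [IsCyclic H] (hH : H.index = 2)
    {x : G} (hx : x ∉ H) : x * x = 1 ∧ ∀ c ∈ H, x * c * x⁻¹ = c⁻¹ := by
  have : IsCyclic (H.map (e : G →* DihedralGroup k)) :=
    isCyclic_of_surjective _ ((e : G →* DihedralGroup k).subgroupMap_surjective H)
  have hH' : (H.map (e : G →* DihedralGroup k)).index = 2 := by rw [index_map_equiv, hH]
  obtain ⟨i, hi⟩ := DihedralGroup.exists_eq_sr_of_notMem hk hH'
    (x := e x) (by simpa [mem_map_equiv] using hx)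
  refine ⟨e.injective (by simp [hi]), fun c hc ↦ ?_⟩
  obtain ⟨j, hj⟩ := DihedralGroup.exists_eq_r_of_mem hk hH'
    (x := e c) (mem_map_of_mem _ hc)
  apply e.injective
  simp [hi, hj]

namespace Subgroup

variable {G : Type*} [Group G] {H K : Subgroup G}

lemma mul_mem_iff_of_relIndex_eq_two (h : H.relIndex K = 2) {a b : G} (ha : a ∈ K)
    (hb : b ∈ K) : a * b ∈ H ↔ (a ∈ H ↔ b ∈ H) := by
  simpa [mem_subgroupOf] using mul_mem_iff_of_index_two h (a := ⟨a, ha⟩) (b := ⟨b, hb⟩)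

lemma exists_mem_notMem_of_relIndex_eq_two (h : H.relIndex K = 2) : ∃ x ∈ K, x ∉ H :=
  SetLike.not_le_iff_exists.mp fun hKH ↦ by simp [relIndex_eq_one.mpr hKH] at h

lemma le_of_relIndex_eq_two {K' : Subgroup G} (h : H.relIndex K = 2) (hHK' : H ≤ K') {s : G}
    (hsK : s ∈ K) (hsH : s ∉ H) (hsK' : s ∈ K') : K ≤ K' := by
  intro g hg
  by_cases hgH : g ∈ H
  · exact hHK' hgH
  have hsg : s * g ∈ H := (mul_mem_iff_of_relIndex_eq_two h hsK hg).mpr (iff_of_false hsH hgH)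
  simpa using mul_mem (inv_mem hsK') (hHK' hsg)

lemma mul_self_eq_one_and_conj_eq_inv_of_mem_of_notMem {k : ℕ} (hk : 3 ≤ k)
    (e : K ≃* DihedralGroup k) (hHK : H ≤ K) [IsCyclic H] (h : H.relIndex K = 2)
    {x : G} (hxK : x ∈ K) (hxH : x ∉ H) : x * x = 1 ∧ ∀ c ∈ H, x * c * x⁻¹ = c⁻¹ := by
  have : IsCyclic (H.subgroupOf K) := (subgroupOfEquivOfLe hHK).isCyclic.mpr inferInstance
  obtain ⟨hx, hxc⟩ := mul_self_eq_one_and_conj_eq_inv_of_notMem hk e h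
    (x := ⟨x, hxK⟩) (by simpa [mem_subgroupOf] using hxH)
  exact ⟨congrArg Subtype.val hx, fun c hc ↦
    congrArg Subtype.val (hxc ⟨c, hHK hc⟩ (mem_subgroupOf.mpr hc))⟩

end Subgroup

namespace MulAction

lemma mem_orbit_or_mem_orbit_of_card_eq_two {G α : Type*} [Group G] [MulAction G α]
    (h : Nat.card (Quotient (orbitRel G α)) = 2) {x y : α} (hxy : y ∉ orbit G x) (z : α) :
    z ∈ orbit G x ∨ z ∈ orbit G y := by
  have mk_eq {a b : α} : (Quotient.mk'' a : Quotient (orbitRel G α)) = Quotient.mk'' b ↔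
      a ∈ orbit G b := Quotient.eq''.trans orbitRel_apply
  obtain ⟨q, -, hq⟩ := (Nat.card_eq_two_iff' (Quotient.mk'' x)).mp h
  by_contra! hz
  exact hz.2 (mk_eq.mp ((hq _ (mt mk_eq.mp hz.1)).trans (hq _ (mt mk_eq.mp hxy)).symm))

end MulAction

namespace Equiv.Perm

variable {Ω : Type*} {C R : Subgroup (Perm Ω)}

lemma eq_one_of_mem_of_apply_eq_self (hreg : ∀ x y : Ω, ∃! g : R, (g : Perm Ω) x = y)
    {g : Perm Ω} (hg : g ∈ R) {z : Ω} (hz : g z = z) : g = 1 :=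
  congrArg Subtype.val ((hreg z z).unique (y₁ := ⟨g, hg⟩) (y₂ := 1) hz rfl)

lemma apply_notMem_orbit (hreg : ∀ x y : Ω, ∃! g : R, (g : Perm Ω) x = y) (hCR : C ≤ R)
    {g : Perm Ω} (hg : g ∈ R) (hgC : g ∉ C) (z : Ω) : g z ∉ orbit C z := by
  rintro ⟨c, hc : (c : Perm Ω) z = g z⟩
  have : (c : Perm Ω)⁻¹ * g = 1 :=
    eq_one_of_mem_of_apply_eq_self hreg (mul_mem (inv_mem (hCR c.2)) hg)
      (by rw [mul_apply, ← hc, inv_eq_iff_eq])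
  exact hgC (inv_mul_eq_one.mp this ▸ c.2)

lemma eq_one_of_mem_centralizer_of_apply_eq_self {v t : Perm Ω} {ω : Ω}
    (hv : v ∈ centralizer (C : Set (Perm Ω))) (hvω : v ω = ω) (htv : t * v * t⁻¹ = v⁻¹)
    (hcover : ∀ x, x ∈ orbit C ω ∨ x ∈ orbit C (t ω)) : v = 1 := by
  have fixes_orbit {y : Ω} (hy : v y = y) : ∀ x ∈ orbit C y, v x = x := by
    rintro _ ⟨c, rfl⟩
    have := congrArg (· y) (mem_centralizer_iff.mp hv c c.2)
    simp only [mul_apply, hy] at this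
    exact this.symm
  have htω : v (t ω) = t ω := by
    rw [← inv_eq_iff_eq.mp (by rw [← htv]; simp [mul_apply, hvω] : v⁻¹ (t ω) = t ω)]
  ext x
  rcases hcover x with hx | hx
  exacts [fixes_orbit hvω x hx, fixes_orbit htω x hx]

lemma mul_mem_of_swap_orbits [IsMulCommutative C]
    (horb : Nat.card (Quotient (orbitRel C Ω)) = 2) {t s : Perm Ω} (ht : t * t = 1)
    (hs : s * s = 1) (htC : ∀ c ∈ C, t * c * t⁻¹ = c⁻¹) (hsC : ∀ c ∈ C, s * c * s⁻¹ = c⁻¹)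
    (ht_swap : ∀ z, t z ∉ orbit C z) (hs_swap : ∀ z, s z ∉ orbit C z) : t * s ∈ C := by
  obtain ⟨ω⟩ : Nonempty Ω :=
    (Nat.card_pos_iff.mp (by omega : 0 < Nat.card (Quotient (orbitRel C Ω)))).1.map
      Quotient.out
  have hu : t * s ∈ centralizer (C : Set (Perm Ω)) := mem_centralizer_iff.mpr fun c hc ↦
    have htc : SemiconjBy t c⁻¹ c := mul_inv_eq_iff_eq_mul.mp (by simpa using htC _ (inv_mem hc))
    ((htc.mul_left (mul_inv_eq_iff_eq_mul.mp (hsC c hc))).eq).symm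
  obtain ⟨c₁, hc₁ : (c₁ : Perm Ω) ω = t (s ω)⟩ :=
    (MulAction.mem_orbit_or_mem_orbit_of_card_eq_two horb (hs_swap ω) (t (s ω))).resolve_right
      (ht_swap (s ω))
  have hc₁u : Commute (c₁ : Perm Ω) (t * s) := mem_centralizer_iff.mp hu c₁ c₁.2
  have hv : (c₁ : Perm Ω)⁻¹ * (t * s) = 1 := by
    refine eq_one_of_mem_centralizer_of_apply_eq_self (t := t) ?_ ?_ ?_
      (MulAction.mem_orbit_or_mem_orbit_of_card_eq_two horb (ht_swap ω))
    · exact mul_mem (inv_mem (le_centralizer_iff_isMulCommutative.mpr inferInstance c₁.2)) hu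
    · rw [mul_apply, mul_apply, ← hc₁, inv_eq_iff_eq]
    · calc t * ((c₁ : Perm Ω)⁻¹ * (t * s)) * t⁻¹
            = (t * (c₁ : Perm Ω)⁻¹ * t⁻¹) * ((t * t) * s * t⁻¹) := by group
          _ = c₁ * (t * s)⁻¹ := by
            rw [htC _ (inv_mem c₁.2), inv_inv, ht, one_mul, mul_inv_rev,
              inv_eq_of_mul_eq_one_right hs]
          _ = ((c₁ : Perm Ω)⁻¹ * (t * s))⁻¹ := by
            rw [mul_inv_rev (c₁ : Perm Ω)⁻¹, inv_inv, hc₁u.inv_right.eq]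
  exact inv_mul_eq_one.mp hv ▸ c₁.2

end Equiv.Perm

theorem stmt_3_general {Ω : Type*}
    (R₁ R₂ C : Subgroup (Equiv.Perm Ω)) (k : ℕ) (hk : 3 ≤ k)
    (hreg₁ : ∀ x y : Ω, ∃! g : R₁, (g : Equiv.Perm Ω) x = y)
    (hreg₂ : ∀ x y : Ω, ∃! g : R₂, (g : Equiv.Perm Ω) x = y)
    (hdih₁ : Nonempty (R₁ ≃* DihedralGroup k))
    (hdih₂ : Nonempty (R₂ ≃* DihedralGroup k))
    (hC₁ : C ≤ R₁) (hC₂ : C ≤ R₂) (hcyc : IsCyclic C)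
    (hidx₁ : C.relIndex R₁ = 2) (hidx₂ : C.relIndex R₂ = 2)
    (horb : Nat.card (Quotient (MulAction.orbitRel C Ω)) = 2) :
    R₁ = R₂ := by
  obtain ⟨e₁⟩ := hdih₁
  obtain ⟨e₂⟩ := hdih₂
  obtain ⟨t, htR, htC⟩ := Subgroup.exists_mem_notMem_of_relIndex_eq_two hidx₁
  obtain ⟨s, hsR, hsC⟩ := Subgroup.exists_mem_notMem_of_relIndex_eq_two hidx₂
  obtain ⟨ht, ht_inv⟩ :=
    Subgroup.mul_self_eq_one_and_conj_eq_inv_of_mem_of_notMem hk e₁ hC₁ hidx₁ htR htC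
  obtain ⟨hs, hs_inv⟩ :=
    Subgroup.mul_self_eq_one_and_conj_eq_inv_of_mem_of_notMem hk e₂ hC₂ hidx₂ hsR hsC
  have hts : t * s ∈ C := Equiv.Perm.mul_mem_of_swap_orbits horb ht hs ht_inv hs_inv
    (Equiv.Perm.apply_notMem_orbit hreg₁ hC₁ htR htC)
    (Equiv.Perm.apply_notMem_orbit hreg₂ hC₂ hsR hsC)
  apply le_antisymm
  · exact Subgroup.le_of_relIndex_eq_two hidx₁ hC₂ htR htC
      (by simpa using mul_mem (hC₂ hts) (inv_mem hsR))
  · exact Subgroup.le_of_relIndex_eq_two hidx₂ hC₁ hsR hsC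
      (by simpa using mul_mem (inv_mem htR) (hC₁ hts))

/-- Two regular dihedral permutation groups on a finite set Ω whose cyclic
index-2 subgroups (acting semiregularly with two orbits) coincide, are equal. -/
theorem stmt_3 {Ω : Type*} [Fintype Ω]
    (R₁ R₂ C : Subgroup (Equiv.Perm Ω)) (k : ℕ) (hk : 3 ≤ k)
    (hreg₁ : ∀ x y : Ω, ∃! g : R₁, (g : Equiv.Perm Ω) x = y)
    (hreg₂ : ∀ x y : Ω, ∃! g : R₂, (g : Equiv.Perm Ω) x = y)
    (hdih₁ : Nonempty (R₁ ≃* DihedralGroup k))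
    (hdih₂ : Nonempty (R₂ ≃* DihedralGroup k))
    (hC₁ : C ≤ R₁) (hC₂ : C ≤ R₂) (hcyc : IsCyclic C)
    (hidx₁ : C.relIndex R₁ = 2) (hidx₂ : C.relIndex R₂ = 2)
    (hsemi : ∀ g ∈ C, g ≠ 1 → ∀ x : Ω, g x ≠ x)
    (horb : Nat.card (Quotient (MulAction.orbitRel C Ω)) = 2) :
    R₁ = R₂ :=
  stmt_3_general R₁ R₂ C k hk hreg₁ hreg₂ hdih₁ hdih₂ hC₁ hC₂ hcyc hidx₁ hidx₂ horb
end

section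
/- Let ρ and σ be permutations of a set Ω, each of order a prime p, and let α be a permutation commuting with ρ whose order is not divisible by p. Fix y ∈ Ω and 1 ≤ t < p. If for every point z in the forward orbit {yσ^j : j ≥ 0} we have zσ = z(ρ^t α), then yα = y; consequently yσ^j = y(ρ^{tj}) for every j. -/
/-- If σ agrees with ρ^t α at every point of the σ-orbit of y, where σ and ρ
have prime order p, α commutes with ρ and p does not divide the order of α,
then α fixes y and yσ^j = yρ^{tj} for every j. -/
theorem stmt_4 {Ω : Type*} (σ ρ α : Equiv.Perm Ω) (p : ℕ) (hp : p.Prime)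
    (hσ : orderOf σ = p) (hρ : orderOf ρ = p) (hcomm : Commute ρ α)
    (hα : ¬ p ∣ orderOf α) (y : Ω) (t : ℕ) (ht1 : 1 ≤ t) (htp : t < p)
    (hyp : ∀ j : ℕ, σ ((σ ^ j) y) = (ρ ^ t * α) ((σ ^ j) y)) :
    α y = y ∧ ∀ j : ℕ, (σ ^ j) y = (ρ ^ (t * j)) y := by
  have key : ∀ j : ℕ, (σ ^ j) y = ((ρ ^ t * α) ^ j) y := by
    intro j
    induction j with
    | zero => simp
    | succ n ih =>
      rw [pow_succ', pow_succ', Equiv.Perm.mul_apply, Equiv.Perm.mul_apply,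
        hyp n, ih]
  have hc : Commute (ρ ^ t) α := hcomm.pow_left t
  have hmul : ∀ j : ℕ, (ρ ^ t * α) ^ j = ρ ^ (t * j) * α ^ j := by
    intro j
    rw [hc.mul_pow, ← pow_mul]
  have hρtp : ρ ^ (t * p) = 1 := by
    rw [mul_comm, pow_mul, ← hρ, pow_orderOf_eq_one, one_pow]
  have hαp : (α ^ p) y = y := by
    have h1 : (σ ^ p) y = y := by rw [← hσ, pow_orderOf_eq_one]; rfl
    rw [key p, hmul p, hρtp, one_mul] at h1
    exact h1
  have hcop : Nat.Coprime p (orderOf α) := (hp.coprime_iff_not_dvd).mpr hα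
  have hcopZ : IsCoprime (p : ℤ) (orderOf α : ℤ) := by
    rw [Int.isCoprime_iff_gcd_eq_one]
    exact_mod_cast hcop
  obtain ⟨u, v, huv⟩ := hcopZ
  have h1 : (α ^ p : Equiv.Perm Ω) ∈ MulAction.stabilizer (Equiv.Perm Ω) y := by
    simpa [MulAction.mem_stabilizer_iff, Equiv.Perm.smul_def] using hαp
  have h2 : (α ^ (orderOf α) : Equiv.Perm Ω) ∈ MulAction.stabilizer (Equiv.Perm Ω) y := by
    rw [pow_orderOf_eq_one]; exact one_mem _
  have heq : α = (α ^ p) ^ u * (α ^ (orderOf α)) ^ v := by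
    rw [← zpow_natCast α p, ← zpow_natCast α (orderOf α), ← zpow_mul, ← zpow_mul,
      ← zpow_add]
    have : (p : ℤ) * u + (orderOf α : ℤ) * v = 1 := by linarith [huv]
    rw [this, zpow_one]
  have hstab : α ∈ MulAction.stabilizer (Equiv.Perm Ω) y := by
    rw [heq]
    exact mul_mem (zpow_mem h1 u) (zpow_mem h2 v)
  have hαy : α y = y := by
    simpa [MulAction.mem_stabilizer_iff, Equiv.Perm.smul_def] using hstab
  refine ⟨hαy, fun j => ?_⟩
  have hαj : (α ^ j) y = y := by
    induction j with
    | zero => simp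
    | succ n ih => rw [pow_succ, Equiv.Perm.mul_apply, hαy, ih]
  rw [key j, hmul j, Equiv.Perm.mul_apply, hαj]
end

section
/- Let G be a transitive permutation group on Ω and let B be a G-invariant partition whose blocks have prime cardinality p and are the orbits of a semiregular element ρ ∈ G. Define y ≡_B z if there is a sequence y₁ = y, ..., y_k = z of points such that for each i, the block B_{y_{i+1}} of B containing y_{i+1} is not contained in any single orbit of the stabilizer G_{y_i}. Then ≡_B is an equivalence relation on Ω, and its equivalence classes form a G-invariant partition. -/
/-! The one-step relation "the block of `z` is not inside a single `G_y`-orbit" is symmetric: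
if the block `⟨ρ⟩ z` lies in one `G_y`-orbit, then for every `k` some `g ∈ G_y` maps `z` to
`ρ⁻ᵏ z`, and `ρᵏ g` fixes `z` and maps `y` to `ρᵏ y`, so the block `⟨ρ⟩ y` lies in the
`G_z`-orbit of `y`. It is also `G`-equivariant because `B` is `G`-invariant, and `≡_B` is
its reflexive-transitive closure. -/

namespace Relation

theorem reflTransGen_iff_exists_seq {α : Type*} {S : α → α → Prop} {y z : α} :
    ReflTransGen S y z ↔
      ∃ (n : ℕ) (c : ℕ → α), c 0 = y ∧ c n = z ∧ ∀ i < n, S (c i) (c (i + 1)) := by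
  constructor
  · intro h
    induction h with
    | refl => exact ⟨0, fun _ => y, rfl, rfl, fun i hi => absurd hi (Nat.not_lt_zero i)⟩
    | @tail m z _ hmz ih =>
      obtain ⟨n, c, hc0, hcn, hc⟩ := ih
      refine ⟨n + 1, Function.update c (n + 1) z, ?_, by simp, fun i hi => ?_⟩
      · simpa [Function.update_of_ne (Nat.succ_ne_zero n).symm] using hc0
      · rcases Nat.lt_succ_iff_lt_or_eq.1 hi with hi | rfl
        · rw [Function.update_of_ne (by omega), Function.update_of_ne (by omega)]
          exact hc i hi
        · rw [Function.update_of_ne (by omega), Function.update_self, hcn]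
          exact hmz
  · rintro ⟨n, c, rfl, rfl, hc⟩
    induction n with
    | zero => exact .refl
    | succ n ih => exact (ih fun i hi => hc i (by omega)).tail (hc n n.lt_succ_self)

end Relation

namespace Equiv.Perm

variable {Ω : Type*}

def stabOrbit (G : Subgroup (Perm Ω)) (y w : Ω) : Set Ω :=
  {u | ∃ g ∈ G, g y = y ∧ g w = u}

theorem mem_stabOrbit_of_mem_stabOrbit {G : Subgroup (Perm Ω)} {y w z u : Ω}
    (hz : z ∈ stabOrbit G y w) (hu : u ∈ stabOrbit G y w) : u ∈ stabOrbit G y z := by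
  obtain ⟨g, hg, hgy, rfl⟩ := hz
  obtain ⟨h, hh, hhy, rfl⟩ := hu
  refine ⟨h * g⁻¹, mul_mem hh (inv_mem hg), ?_, by simp⟩
  rw [mul_apply, inv_eq_iff_eq.2 hgy.symm, hhy]

theorem apply_mem_stabOrbit {G : Subgroup (Perm Ω)} {g : Perm Ω} (hg : g ∈ G) {y w u : Ω}
    (hu : u ∈ stabOrbit G y w) : g u ∈ stabOrbit G (g y) (g w) := by
  obtain ⟨h, hh, hhy, rfl⟩ := hu
  exact ⟨g * h * g⁻¹, mul_mem (mul_mem hg hh) (inv_mem hg), by simp [hhy], by simp⟩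

theorem setOf_sameCycle_subset_stabOrbit {G : Subgroup (Perm Ω)} {ρ : Perm Ω} (hρ : ρ ∈ G)
    {y z w : Ω} (hz : {x | ρ.SameCycle z x} ⊆ stabOrbit G y w) :
    {x | ρ.SameCycle y x} ⊆ stabOrbit G z y := by
  rintro _ ⟨k, rfl⟩
  obtain ⟨g, hg, hgy, hgz⟩ :=
    mem_stabOrbit_of_mem_stabOrbit (hz ⟨0, rfl⟩) (hz ⟨-k, rfl⟩)
  refine ⟨ρ ^ k * g, mul_mem (zpow_mem hρ k) hg, ?_, by rw [mul_apply, hgy]⟩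
  rw [zpow_zero, one_apply] at hgz
  rw [mul_apply, hgz, ← mul_apply, ← zpow_add, add_neg_cancel, zpow_zero, one_apply]

theorem eq_setOf_sameCycle_of_mem {ρ : Perm Ω} {z₀ z : Ω} {b : Set Ω}
    (hb : b = {x | ∃ j : ℤ, x = (ρ ^ j) z₀}) (hz : z ∈ b) : b = {x | ρ.SameCycle z x} := by
  have hmem : ∀ x, x ∈ b ↔ ρ.SameCycle z₀ x := fun x => by
    subst hb
    exact ⟨fun ⟨j, hj⟩ => ⟨j, hj.symm⟩, fun ⟨j, hj⟩ => ⟨j, hj.symm⟩⟩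
  have hz₀ := (hmem z).1 hz
  ext x
  rw [hmem, Set.mem_ofPred_eq]
  exact ⟨hz₀.symm.trans, hz₀.trans⟩

def IsChainStep (G : Subgroup (Perm Ω)) (B : Set (Set Ω)) (y z : Ω) : Prop :=
  ∀ b ∈ B, z ∈ b → ¬ ∃ w, b ⊆ stabOrbit G y w

variable {G : Subgroup (Perm Ω)} {B : Set (Set Ω)} {y z : Ω}

theorem IsChainStep.symm {ρ : Perm Ω} (hρ : ρ ∈ G) (hcover : ∀ x, ∃ b ∈ B, x ∈ b)
    (horb : ∀ b ∈ B, ∃ z₀, b = {x | ∃ j : ℤ, x = (ρ ^ j) z₀}) (h : IsChainStep G B y z) :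
    IsChainStep G B z y := by
  rintro b hb hyb ⟨w, hw⟩
  obtain ⟨b', hb', hzb'⟩ := hcover z
  obtain ⟨y₀, hy₀⟩ := horb b hb
  obtain ⟨z₀, hz₀⟩ := horb b' hb'
  rw [eq_setOf_sameCycle_of_mem hy₀ hyb] at hw
  refine h b' hb' hzb' ⟨z, ?_⟩
  rw [eq_setOf_sameCycle_of_mem hz₀ hzb']
  exact setOf_sameCycle_subset_stabOrbit hρ hw

theorem IsChainStep.apply (hinv : ∀ b ∈ B, ∀ g ∈ G, (⇑g) '' b ∈ B) {g : Perm Ω} (hg : g ∈ G)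
    (h : IsChainStep G B y z) : IsChainStep G B (g y) (g z) := by
  rintro b hb hzb ⟨w, hw⟩
  refine h (⇑g⁻¹ '' b) (hinv b hb g⁻¹ (inv_mem hg)) ⟨g z, hzb, by simp⟩ ⟨g⁻¹ w, ?_⟩
  rintro _ ⟨u, hu, rfl⟩
  simpa using apply_mem_stabOrbit (inv_mem hg) (hw hu)

end Equiv.Perm

open Equiv.Perm Relation in
theorem stmt_8_general {Ω : Type*} (G : Subgroup (Equiv.Perm Ω))
    (B : Set (Set Ω)) (hB : Setoid.IsPartition B)
    (hinv : ∀ b ∈ B, ∀ g ∈ G, (⇑g) '' b ∈ B)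
    (ρ : Equiv.Perm Ω) (hρG : ρ ∈ G)
    (hρorb : ∀ b ∈ B, ∃ z : Ω, b = {x : Ω | ∃ j : ℤ, x = (ρ ^ j) z})
    (r : Ω → Ω → Prop)
    (hr : ∀ y z : Ω, r y z ↔ ∃ (n : ℕ) (c : ℕ → Ω), c 0 = y ∧ c n = z ∧
      ∀ i < n, ∀ b ∈ B, c (i + 1) ∈ b →
        ¬ ∃ w : Ω, b ⊆ {u : Ω | ∃ g ∈ G, g (c i) = c i ∧ g w = u}) :
    Equivalence r ∧
      ∀ g ∈ G, ∀ y : Ω, (fun u => g u) '' {z : Ω | r y z} = {z : Ω | r (g y) z} := by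
  obtain rfl : r = ReflTransGen (IsChainStep G B) := by
    ext y z
    exact (hr y z).trans (reflTransGen_iff_exists_seq (S := IsChainStep G B)).symm
  have : Std.Symm (IsChainStep G B) :=
    ⟨fun _ _ => IsChainStep.symm hρG (fun x => (hB.2 x).exists) hρorb⟩
  have hmap : ∀ g ∈ G, ∀ y z, ReflTransGen (IsChainStep G B) y z →
      ReflTransGen (IsChainStep G B) (g y) (g z) := fun g hg =>
    ReflTransGen.lift g fun _ _ => IsChainStep.apply hinv hg
  refine ⟨⟨fun _ => .refl, Std.Symm.symm _ _, .trans⟩, fun g hg y => ?_⟩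
  ext z
  refine ⟨?_, fun hz => ⟨g⁻¹ z, ?_, by simp⟩⟩
  · rintro ⟨u, hu, rfl⟩
    exact hmap g hg y u hu
  · simpa using hmap g⁻¹ (inv_mem hg) _ _ hz

/-- The chain relation ≡_B (with respect to a G-invariant partition B whose
blocks have prime cardinality p and are the orbits of a semiregular ρ ∈ G) is
an equivalence relation, and its classes form a G-invariant partition. -/
theorem stmt_8 {Ω : Type*} (G : Subgroup (Equiv.Perm Ω))
    (htrans : ∀ x y : Ω, ∃ g ∈ G, g x = y)
    (B : Set (Set Ω)) (hB : Setoid.IsPartition B)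
    (hinv : ∀ b ∈ B, ∀ g ∈ G, (⇑g) '' b ∈ B)
    (p : ℕ) (hp : p.Prime)
    (ρ : Equiv.Perm Ω) (hρG : ρ ∈ G)
    (hρorb : ∀ b ∈ B, ∃ z : Ω, b = {x : Ω | ∃ j : ℤ, x = (ρ ^ j) z})
    (hcard : ∀ b ∈ B, Nat.card b = p)
    (r : Ω → Ω → Prop)
    (hr : ∀ y z : Ω, r y z ↔ ∃ (n : ℕ) (c : ℕ → Ω), c 0 = y ∧ c n = z ∧
      ∀ i < n, ∀ b ∈ B, c (i + 1) ∈ b →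
        ¬ ∃ w : Ω, b ⊆ {u : Ω | ∃ g ∈ G, g (c i) = c i ∧ g w = u}) :
    Equivalence r ∧
      ∀ g ∈ G, ∀ y : Ω, (fun u => g u) '' {z : Ω | r y z} = {z : Ω | r (g y) z} :=
  stmt_8_general G B hB hinv ρ hρG hρorb r hr
end

section
/- Let G be transitive on Ω with G-invariant partitions B (blocks of prime cardinality p, orbits of semiregular ρ) and C (C ⪯ the partition into ρ-orbit unions), where the blocks of C are the orbits of some ⟨ρ_j⟩ with ρ_j semiregular. If C ≠ B and for every y the block C_y meets each block of B in at most one point, then every z ∈ C_y satisfies y ≡_B z; that is, the equivalence classes of ≡_B refine-wise contain the blocks of C (X ⪰ C). -/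
/-!
A single step already links `y` to any `z` in the block `C_y`. Suppose the block `B_z` lay in one
orbit of the stabilizer `G_y`. As `|B_z| = p ≥ 2`, some `h ∈ G_y` moves `z` to another point `z'`
of `B_z`. Since `h` fixes `y` and `C` is `G`-invariant, `h` fixes `C_y` setwise, so `z'` is a second
point of `C_y ∩ B_z`, which is impossible.
-/

lemma Setoid.IsPartition.image_eq_self_of_apply_eq {Ω : Type*} {C : Set (Set Ω)}
    (hC : Setoid.IsPartition C) {c : Set Ω} (hc : c ∈ C) {f : Ω → Ω} (hfc : f '' c ∈ C)
    {y : Ω} (hy : y ∈ c) (hfy : f y = y) : f '' c = c :=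
  Setoid.eq_of_mem_eqv_class hC.2 hfc ⟨y, hy, hfy⟩ hc hy

lemma exists_fixing_apply_eq_of_mem_stabilizer_orbit {Ω : Type*} {G : Subgroup (Equiv.Perm Ω)}
    {y w z z' : Ω} (hz : ∃ g ∈ G, g y = y ∧ g w = z) (hz' : ∃ g ∈ G, g y = y ∧ g w = z') :
    ∃ h ∈ G, h y = y ∧ h z = z' := by
  obtain ⟨g, hgG, hgy, rfl⟩ := hz
  obtain ⟨g', hg'G, hg'y, rfl⟩ := hz'
  refine ⟨g' * g⁻¹, G.mul_mem hg'G (G.inv_mem hgG), ?_, by simp⟩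
  rw [Equiv.Perm.mul_apply, Equiv.Perm.inv_eq_iff_eq.mpr hgy.symm, hg'y]

lemma not_subset_stabilizer_orbit {Ω : Type*} {G : Subgroup (Equiv.Perm Ω)} {C : Set (Set Ω)}
    (hC : Setoid.IsPartition C) (hCinv : ∀ c ∈ C, ∀ g ∈ G, (⇑g) '' c ∈ C)
    {c b : Set Ω} (hc : c ∈ C) (hmeet : ∀ u ∈ c ∩ b, ∀ v ∈ c ∩ b, u = v)
    {y z z' : Ω} (hy : y ∈ c) (hz : z ∈ c ∩ b) (hz' : z' ∈ b) (hne : z' ≠ z) :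
    ¬ ∃ w : Ω, b ⊆ {u : Ω | ∃ g ∈ G, g y = y ∧ g w = u} := by
  rintro ⟨w, hw⟩
  obtain ⟨h, hhG, hhy, hhz⟩ := exists_fixing_apply_eq_of_mem_stabilizer_orbit (hw hz.2) (hw hz')
  have hhc : (⇑h) '' c = c := hC.image_eq_self_of_apply_eq hc (hCinv c hc h hhG) hy hhy
  have hz'c : z' ∈ c := hhc ▸ ⟨z, hz.1, hhz⟩
  exact hne (hmeet z' ⟨hz'c, hz'⟩ z hz)

theorem stmt_10_general {Ω : Type*} (G : Subgroup (Equiv.Perm Ω))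
    (B : Set (Set Ω))
    (p : ℕ) (hp : p.Prime)
    (hcard : ∀ b ∈ B, Nat.card b = p)
    (C : Set (Set Ω)) (hC : Setoid.IsPartition C)
    (hCinv : ∀ c ∈ C, ∀ g ∈ G, (⇑g) '' c ∈ C)
    (hmeet : ∀ c ∈ C, ∀ b ∈ B, ∀ y ∈ c ∩ b, ∀ z ∈ c ∩ b, y = z)
    (r : Ω → Ω → Prop)
    (hr : ∀ y z : Ω, r y z ↔ ∃ (n : ℕ) (c : ℕ → Ω), c 0 = y ∧ c n = z ∧
      ∀ i < n, ∀ b ∈ B, c (i + 1) ∈ b →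
        ¬ ∃ w : Ω, b ⊆ {u : Ω | ∃ g ∈ G, g (c i) = c i ∧ g w = u}) :
    ∀ c ∈ C, ∀ y ∈ c, ∀ z ∈ c, r y z := by
  intro c hc y hy z hz
  rw [hr]
  refine ⟨1, fun i => if i = 0 then y else z, by simp, by simp, ?_⟩
  intro i hi b hb hzb
  obtain rfl : i = 0 := by omega
  simp only [zero_add, one_ne_zero, if_false, if_true] at hzb ⊢
  have hb_card : 1 < b.ncard := by
    rw [← Nat.card_coe_set_eq, hcard b hb]
    exact hp.one_lt
  obtain ⟨z', hz'b, hne⟩ := Set.exists_ne_of_one_lt_ncard hb_card z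
  exact not_subset_stabilizer_orbit hC hCinv hc (hmeet c hc b hb) hy ⟨hz, hzb⟩ hz'b hne

/-- With the chain relation ≡_B as before, if C is a further G-invariant
partition (blocks the orbits of a semiregular ρⱼ ∈ G), C ≠ B, and each block
of C meets each block of B in at most one point, then every block of C is
contained in a single equivalence class of ≡_B (X ⪰ C). -/
theorem stmt_10 {Ω : Type*} (G : Subgroup (Equiv.Perm Ω))
    (htrans : ∀ x y : Ω, ∃ g ∈ G, g x = y)
    (B : Set (Set Ω)) (hB : Setoid.IsPartition B)
    (hinv : ∀ b ∈ B, ∀ g ∈ G, (⇑g) '' b ∈ B)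
    (p : ℕ) (hp : p.Prime)
    (ρ : Equiv.Perm Ω) (hρG : ρ ∈ G)
    (hρorb : ∀ b ∈ B, ∃ z : Ω, b = {x : Ω | ∃ j : ℤ, x = (ρ ^ j) z})
    (hcard : ∀ b ∈ B, Nat.card b = p)
    (C : Set (Set Ω)) (hC : Setoid.IsPartition C)
    (hCinv : ∀ c ∈ C, ∀ g ∈ G, (⇑g) '' c ∈ C)
    (ρj : Equiv.Perm Ω) (hρjG : ρj ∈ G)
    (hρjsemi : ∀ (m : ℤ) (x : Ω), (ρj ^ m) x = x → ρj ^ m = 1)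
    (hCorb : ∀ c ∈ C, ∃ z : Ω, c = {x : Ω | ∃ j : ℤ, x = (ρj ^ j) z})
    (hCB : C ≠ B)
    (hmeet : ∀ c ∈ C, ∀ b ∈ B, ∀ y ∈ c ∩ b, ∀ z ∈ c ∩ b, y = z)
    (r : Ω → Ω → Prop)
    (hr : ∀ y z : Ω, r y z ↔ ∃ (n : ℕ) (c : ℕ → Ω), c 0 = y ∧ c n = z ∧
      ∀ i < n, ∀ b ∈ B, c (i + 1) ∈ b →
        ¬ ∃ w : Ω, b ⊆ {u : Ω | ∃ g ∈ G, g (c i) = c i ∧ g w = u}) :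
    ∀ c ∈ C, ∀ y ∈ c, ∀ z ∈ c, r y z :=
  stmt_10_general G B p hp hcard C hC hCinv hmeet r hr
end

section
/- Let G = ⟨R_r, R_r^π⟩ where R_r = ⟨C_r, τ₁⟩ and R_r^π = ⟨C_r^π, τ₂⟩ are regular dihedral groups of order 2k on Ω sharing the two orbits F₁, F₂ of their cyclic halves. Suppose ρ ∈ C_r has odd prime order and ρ = σ for the corresponding generator σ ∈ C_r^π (i.e., σ_i = ρ_i). Then for g ∈ G: F₁g = F₁ if and only if g commutes with ρ, and F₁g = F₂ if and only if g^{-1}ρg = ρ^{-1}. -/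
/-- In G = ⟨R_r, R_r^π⟩ with shared odd-prime-order element ρ = σ in both
cyclic halves, an element g ∈ G fixes F₁ setwise iff it commutes with ρ, and
maps F₁ to F₂ iff it inverts ρ by conjugation. -/
theorem stmt_11 {Ω : Type*} [Fintype Ω]
    (C₁ C₂ : Subgroup (Equiv.Perm Ω)) (τ₁ τ₂ : Equiv.Perm Ω)
    (F₁ F₂ : Set Ω)
    (hcyc₁ : IsCyclic C₁) (hcyc₂ : IsCyclic C₂)
    (hunion : F₁ ∪ F₂ = Set.univ) (hdisj : Disjoint F₁ F₂)
    (hne₁ : F₁.Nonempty) (hne₂ : F₂.Nonempty)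
    (hC₁F : ∀ g ∈ C₁, ∀ x ∈ F₁, g x ∈ F₁)
    (hC₂F : ∀ g ∈ C₂, ∀ x ∈ F₁, g x ∈ F₁)
    (hτ₁F : ∀ x ∈ F₁, τ₁ x ∈ F₂) (hτ₁F' : ∀ x ∈ F₂, τ₁ x ∈ F₁)
    (hτ₂F : ∀ x ∈ F₁, τ₂ x ∈ F₂) (hτ₂F' : ∀ x ∈ F₂, τ₂ x ∈ F₁)
    (hτ₁inv : ∀ c ∈ C₁, τ₁⁻¹ * c * τ₁ = c⁻¹)
    (hτ₂inv : ∀ c ∈ C₂, τ₂⁻¹ * c * τ₂ = c⁻¹)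
    (p : ℕ) (hp : p.Prime) (hodd : Odd p)
    (ρ : Equiv.Perm Ω) (hρ : orderOf ρ = p) (hρ₁ : ρ ∈ C₁) (hρ₂ : ρ ∈ C₂) :
    ∀ g ∈ Subgroup.closure ((C₁ : Set (Equiv.Perm Ω)) ∪ (C₂ : Set (Equiv.Perm Ω)) ∪ {τ₁, τ₂}),
      ((∀ x ∈ F₁, g x ∈ F₁) ↔ Commute g ρ) ∧
      ((∀ x ∈ F₁, g x ∈ F₂) ↔ g⁻¹ * ρ * g = ρ⁻¹) := by
  -- ρ ≠ ρ⁻¹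
  have hρne : ρ ≠ ρ⁻¹ := by
    intro h
    have h2 : ρ ^ 2 = 1 := by
      rw [sq]; nth_rewrite 2 [h]; exact mul_inv_cancel ρ
    have hd : orderOf ρ ∣ 2 := orderOf_dvd_of_pow_eq_one h2
    rw [hρ] at hd
    have h2' := (Nat.prime_dvd_prime_iff_eq hp Nat.prime_two).mp hd
    rw [h2'] at hodd
    simp [Nat.odd_iff] at hodd
  -- key predicate
  set P : Equiv.Perm Ω → Prop := fun g =>
    ((∀ x ∈ F₁, g x ∈ F₁) ∧ (∀ x ∈ F₂, g x ∈ F₂) ∧ Commute g ρ) ∨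
    ((∀ x ∈ F₁, g x ∈ F₂) ∧ (∀ x ∈ F₂, g x ∈ F₁) ∧ g⁻¹ * ρ * g = ρ⁻¹) with hP
  have hmem : ∀ x : Ω, x ∈ F₁ ∪ F₂ := by rw [hunion]; exact fun x => trivial
  -- cyclic elements satisfy P
  have hcycP : ∀ (C : Subgroup (Equiv.Perm Ω)), IsCyclic C → ρ ∈ C →
      (∀ g ∈ C, ∀ x ∈ F₁, g x ∈ F₁) → ∀ c ∈ C, P c := by
    intro C hcyc hρC hCF c hc
    left
    refine ⟨hCF c hc, ?_, ?_⟩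
    · intro x hx
      rcases hmem (c x) with h | h
      · exfalso
        have := hCF c⁻¹ (inv_mem hc) _ h
        simp at this
        exact Set.disjoint_left.mp hdisj this hx
      · exact h
    · letI := hcyc.commGroup
      have : (⟨c, hc⟩ : C) * ⟨ρ, hρC⟩ = ⟨ρ, hρC⟩ * ⟨c, hc⟩ := mul_comm _ _
      exact congrArg Subtype.val this
  -- τ satisfies P
  have hτP : ∀ (τ : Equiv.Perm Ω), (∀ x ∈ F₁, τ x ∈ F₂) → (∀ x ∈ F₂, τ x ∈ F₁) →
      (τ⁻¹ * ρ * τ = ρ⁻¹) → P τ := fun τ h1 h2 h3 => Or.inr ⟨h1, h2, h3⟩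
  have key : ∀ g ∈ Subgroup.closure
      ((C₁ : Set (Equiv.Perm Ω)) ∪ (C₂ : Set (Equiv.Perm Ω)) ∪ {τ₁, τ₂}), P g := by
    intro g hg
    refine Subgroup.closure_induction ?_ ?_ ?_ ?_ hg
    · rintro x ((hx | hx) | hx)
      · exact hcycP C₁ hcyc₁ hρ₁ hC₁F x hx
      · exact hcycP C₂ hcyc₂ hρ₂ hC₂F x hx
      · rcases hx with rfl | hx
        · exact hτP _ hτ₁F hτ₁F' (hτ₁inv ρ hρ₁)
        · rw [Set.mem_singleton_iff] at hx; subst hx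
          exact hτP _ hτ₂F hτ₂F' (hτ₂inv ρ hρ₂)
    · left
      exact ⟨fun x hx => hx, fun x hx => hx, Commute.one_left ρ⟩
    · rintro x y _ _ (⟨hx1, hx2, hx3⟩ | ⟨hx1, hx2, hx3⟩) (⟨hy1, hy2, hy3⟩ | ⟨hy1, hy2, hy3⟩)
      · exact Or.inl ⟨fun z hz => hx1 _ (hy1 z hz), fun z hz => hx2 _ (hy2 z hz), hx3.mul_left hy3⟩
      · refine Or.inr ⟨fun z hz => hx2 _ (hy1 z hz), fun z hz => hx1 _ (hy2 z hz), ?_⟩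
        have hc : x⁻¹ * ρ * x = ρ := by
          rw [mul_assoc, ← hx3.eq]; group
        calc (x * y)⁻¹ * ρ * (x * y) = y⁻¹ * (x⁻¹ * ρ * x) * y := by group
          _ = y⁻¹ * ρ * y := by rw [hc]
          _ = ρ⁻¹ := hy3
      · refine Or.inr ⟨fun z hz => hx1 _ (hy1 z hz), fun z hz => hx2 _ (hy2 z hz), ?_⟩
        have hc : y⁻¹ * ρ * y = ρ := by
          rw [mul_assoc, ← hy3.eq]; group
        calc (x * y)⁻¹ * ρ * (x * y) = y⁻¹ * (x⁻¹ * ρ * x) * y := by group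
          _ = y⁻¹ * ρ⁻¹ * y := by rw [hx3]
          _ = (y⁻¹ * ρ * y)⁻¹ := by group
          _ = ρ⁻¹ := by rw [hc]
      · refine Or.inl ⟨fun z hz => hx2 _ (hy1 z hz), fun z hz => hx1 _ (hy2 z hz), ?_⟩
        have : (x * y)⁻¹ * ρ * (x * y) = ρ := by
          calc (x * y)⁻¹ * ρ * (x * y) = y⁻¹ * (x⁻¹ * ρ * x) * y := by group
            _ = y⁻¹ * ρ⁻¹ * y := by rw [hx3]
            _ = (y⁻¹ * ρ * y)⁻¹ := by group
            _ = ρ := by rw [hy3]; group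
        show (x * y) * ρ = ρ * (x * y)
        calc (x * y) * ρ = (x * y) * ((x * y)⁻¹ * ρ * (x * y)) := by rw [this]
          _ = ρ * (x * y) := by group
    · rintro x _ (⟨hx1, hx2, hx3⟩ | ⟨hx1, hx2, hx3⟩)
      · refine Or.inl ⟨?_, ?_, hx3.inv_left⟩
        · intro z hz
          rcases hmem (x⁻¹ z) with h | h
          · exact h
          · exfalso
            have := hx2 _ h
            simp at this
            exact Set.disjoint_left.mp hdisj hz this
        · intro z hz
          rcases hmem (x⁻¹ z) with h | h
          · exfalso
            have := hx1 _ h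
            simp at this
            exact Set.disjoint_left.mp hdisj this hz
          · exact h
      · refine Or.inr ⟨?_, ?_, ?_⟩
        · intro z hz
          rcases hmem (x⁻¹ z) with h | h
          · exfalso
            have := hx1 _ h
            simp at this
            exact Set.disjoint_left.mp hdisj hz this
          · exact h
        · intro z hz
          rcases hmem (x⁻¹ z) with h | h
          · exact h
          · exfalso
            have := hx2 _ h
            simp at this
            exact Set.disjoint_left.mp hdisj this hz
        · -- from x⁻¹ρx = ρ⁻¹ get x ρ x⁻¹ = ρ⁻¹
          have h4 : x * ρ⁻¹ * x⁻¹ = ρ := by rw [← hx3]; group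
          calc (x⁻¹)⁻¹ * ρ * x⁻¹ = (x * ρ⁻¹ * x⁻¹)⁻¹ := by group
            _ = ρ⁻¹ := by rw [h4]
  -- conclude
  intro g hg
  rcases key g hg with ⟨h1, h2, h3⟩ | ⟨h1, h2, h3⟩
  · constructor
    · exact iff_of_true h1 h3
    · apply iff_of_false
      · intro h
        obtain ⟨x, hx⟩ := hne₁
        exact Set.disjoint_left.mp hdisj (h1 x hx) (h x hx)
      · intro h
        have hfix : g⁻¹ * ρ * g = ρ := by
          rw [mul_assoc, ← h3.eq]; group
        exact hρne (hfix.symm.trans h)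
  · constructor
    · apply iff_of_false
      · intro h
        obtain ⟨x, hx⟩ := hne₁
        exact Set.disjoint_left.mp hdisj (h x hx) (h1 x hx)
      · intro hcom
        have hfix : g⁻¹ * ρ * g = ρ := by
          rw [mul_assoc, ← hcom.eq]; group
        exact hρne (hfix.symm.trans h3)
    · exact iff_of_true h1 h3
end

section
/- Let G be transitive on Ω with a G-invariant partition B, and suppose σ_i, ρ_i, σ_j, ρ_j ∈ G each fix every block of B setwise, where σ_i and σ_j commute, ρ_i has prime order p_i, and for each block B ∈ B there exists k_B with 1 ≤ k_B ≤ p_i − 1 such that σ_i agrees with ρ_i^{k_B} on every point of B. Then σ_j commutes with ρ_i. -/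
/-!
On a block `b`, `σᵢ = ρᵢ ^ k` with `k` prime to the order `pᵢ` of `ρᵢ`, so inverting `k` modulo
`pᵢ` gives `ρᵢ = σᵢ ^ m` on `b`. Since `σⱼ` commutes with `σᵢ` and keeps every point inside its
block, `σⱼ (ρᵢ x) = σⱼ (σᵢ ^ m x) = σᵢ ^ m (σⱼ x) = ρᵢ (σⱼ x)`.
-/

open Set Equiv

theorem Set.EqOn.iterate {α : Type*} {f g : α → α} {s : Set α} (hf : MapsTo f s s)
    (h : EqOn f g s) (n : ℕ) : EqOn f^[n] g^[n] s := by
  induction n with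
  | zero => exact fun _ _ => rfl
  | succ n ih =>
    intro x hx
    rw [Function.iterate_succ_apply, Function.iterate_succ_apply, ih (hf hx), h hx]

namespace Equiv.Perm

variable {α : Type*} {σ ρ τ : Perm α} {b : Set α}

theorem exists_eqOn_pow_of_eqOn_pow_coprime (hρ : MapsTo ρ b b) {k : ℕ}
    (hk : k.Coprime (orderOf ρ)) (h : EqOn σ ⇑(ρ ^ k) b) : ∃ m : ℕ, EqOn ρ ⇑(σ ^ m) b := by
  obtain ⟨m, hm⟩ := exists_pow_eq_self_of_coprime hk
  have hρk : MapsTo ⇑(ρ ^ k) b b := by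
    rw [coe_pow]
    exact hρ.iterate k
  have hρkσ : EqOn ⇑((ρ ^ k) ^ m) ⇑(σ ^ m) b := by
    rw [coe_pow, coe_pow]
    exact h.symm.iterate hρk m
  exact ⟨m, hm ▸ hρkσ⟩

theorem apply_apply_comm_of_eqOn_pow (hc : Commute σ τ) {m : ℕ} (h : EqOn ρ ⇑(σ ^ m) b)
    (hτ : MapsTo τ b b) {x : α} (hx : x ∈ b) : τ (ρ x) = ρ (τ x) := by
  rw [h hx, h (hτ hx), ← mul_apply, ← mul_apply, (hc.pow_left m).eq]

end Equiv.Perm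

theorem stmt_12_general {Ω : Type*}
    (B : Set (Set Ω)) (hB : Setoid.IsPartition B)
    (σi σj ρi : Equiv.Perm Ω)
    (hfixσj : ∀ b ∈ B, ∀ x ∈ b, σj x ∈ b)
    (hfixρi : ∀ b ∈ B, ∀ x ∈ b, ρi x ∈ b)
    (hcomm : Commute σi σj)
    (pi : ℕ) (hpi : pi.Prime) (hord : orderOf ρi = pi)
    (hk : ∀ b ∈ B, ∃ k : ℕ, 1 ≤ k ∧ k ≤ pi - 1 ∧ ∀ x ∈ b, σi x = (ρi ^ k) x) :
    Commute σj ρi := by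
  refine Perm.ext fun x => ?_
  obtain ⟨b, ⟨hb, hxb⟩, -⟩ := hB.2 x
  obtain ⟨k, hk1, hkp, hσρ⟩ := hk b hb
  have hcop : k.Coprime (orderOf ρi) := by
    rw [hord, Nat.coprime_comm, hpi.coprime_iff_not_dvd]
    exact Nat.not_dvd_of_pos_of_lt hk1 (by omega)
  obtain ⟨m, hρσ⟩ := Perm.exists_eqOn_pow_of_eqOn_pow_coprime (hfixρi b hb) hcop hσρ
  exact Perm.apply_apply_comm_of_eqOn_pow hcomm hρσ (hfixσj b hb) hxb

/-- If σᵢ, ρᵢ, σⱼ, ρⱼ ∈ G fix every block of a G-invariant partition B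
setwise, σᵢ commutes with σⱼ, ρᵢ has prime order pᵢ, and on each block B the
permutation σᵢ agrees pointwise with ρᵢ^{k_B} for some 1 ≤ k_B ≤ pᵢ − 1, then
σⱼ commutes with ρᵢ. -/
theorem stmt_12 {Ω : Type*} (G : Subgroup (Equiv.Perm Ω))
    (htrans : ∀ x y : Ω, ∃ g ∈ G, g x = y)
    (B : Set (Set Ω)) (hB : Setoid.IsPartition B)
    (hinv : ∀ b ∈ B, ∀ g ∈ G, (⇑g) '' b ∈ B)
    (σi σj ρi ρj : Equiv.Perm Ω)
    (hσiG : σi ∈ G) (hσjG : σj ∈ G) (hρiG : ρi ∈ G) (hρjG : ρj ∈ G)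
    (hfixσi : ∀ b ∈ B, ∀ x ∈ b, σi x ∈ b)
    (hfixσj : ∀ b ∈ B, ∀ x ∈ b, σj x ∈ b)
    (hfixρi : ∀ b ∈ B, ∀ x ∈ b, ρi x ∈ b)
    (hfixρj : ∀ b ∈ B, ∀ x ∈ b, ρj x ∈ b)
    (hcomm : Commute σi σj)
    (pi : ℕ) (hpi : pi.Prime) (hord : orderOf ρi = pi)
    (hk : ∀ b ∈ B, ∃ k : ℕ, 1 ≤ k ∧ k ≤ pi - 1 ∧ ∀ x ∈ b, σi x = (ρi ^ k) x) :
    Commute σj ρi :=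
  stmt_12_general B hB σi σj ρi hfixσj hfixρi hcomm pi hpi hord hk
end

section
/- Let β be a permutation of Ω fixing F₁ and F₂ setwise (the two orbits of the cyclic half of the regular dihedral group R_r ≤ G = ⟨R_r, R_r^π⟩), and let u, v ∈ Ω. Suppose there is a G-invariant partition D such that: (i) some g ∈ G satisfies (D_u, D_v)β = (D_u, D_v)g (as an action on blocks), and (ii) the block D_v lies within a single orbit of G_u. Then there exists h ∈ G with (u,v)β = (u,v)h. -/
/-!
Write `β u = g u'` and `β v = g v'` with `u' ∈ D_u`, `v' ∈ D_v`, and let `r, a ∈ R₁` send `u`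
to `u'` and to `v`. Each `Rᵢ` normalizes its cyclic half `Cᵢ`, whose orbits are `F₁, F₂`, so `G`
preserves the partition `{F₁, F₂}` and `G_u` preserves each part. Since `a` carries `u, u'` into
`D_v`, which lies in one `G_u`-orbit, `u` and `u'` lie in the same part, and regularity forces
`r ∈ C₁`. Conjugation by `a` acts on the cyclic group `C₁` as a power map, so `r`, which
stabilizes `D_u`, also stabilizes `D_v = a D_u`. Finally elements of `G_u` moving `v` to `r⁻¹ v'`
inside `D_v` correct `g r` to the required `h`.
-/

/-- A pair of regular dihedral permutation groups of squarefree order 2k on Ω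
whose cyclic index-2 halves share the same two orbits F₁, F₂. -/
structure DihedralPairSetup (Ω : Type*) where
  R₁ : Subgroup (Equiv.Perm Ω)
  R₂ : Subgroup (Equiv.Perm Ω)
  C₁ : Subgroup (Equiv.Perm Ω)
  C₂ : Subgroup (Equiv.Perm Ω)
  F₁ : Set Ω
  F₂ : Set Ω
  k : ℕ
  k_odd : Odd k
  k_squarefree : Squarefree k
  k_ge : 3 ≤ k
  card_eq : Nat.card Ω = 2 * k
  dih₁ : Nonempty (R₁ ≃* DihedralGroup k)
  dih₂ : Nonempty (R₂ ≃* DihedralGroup k)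
  reg₁ : ∀ x y : Ω, ∃! g : R₁, (g : Equiv.Perm Ω) x = y
  reg₂ : ∀ x y : Ω, ∃! g : R₂, (g : Equiv.Perm Ω) x = y
  hC₁ : C₁ ≤ R₁
  hC₂ : C₂ ≤ R₂
  cyc₁ : IsCyclic C₁
  cyc₂ : IsCyclic C₂
  idx₁ : C₁.relIndex R₁ = 2
  idx₂ : C₂.relIndex R₂ = 2
  union_eq : F₁ ∪ F₂ = Set.univ
  disj : Disjoint F₁ F₂
  ne₁ : F₁.Nonempty
  ne₂ : F₂.Nonempty
  orb₁ : ∀ x ∈ F₁, F₁ = {y : Ω | ∃ g ∈ C₁, g x = y}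
  orb₁' : ∀ x ∈ F₂, F₂ = {y : Ω | ∃ g ∈ C₁, g x = y}
  orb₂ : ∀ x ∈ F₁, F₁ = {y : Ω | ∃ g ∈ C₂, g x = y}
  orb₂' : ∀ x ∈ F₂, F₂ = {y : Ω | ∃ g ∈ C₂, g x = y}

open Equiv Set Pointwise

theorem Subgroup.le_normalizer_of_relIndex_eq_two {G : Type*} [Group G] {C R : Subgroup G}
    (hCR : C ≤ R) (h : C.relIndex R = 2) : R ≤ Subgroup.normalizer C :=
  have := Subgroup.normal_of_index_eq_two h
  Subgroup.le_normalizer_of_normal_subgroupOf hCR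

theorem Subgroup.exists_conj_eq_zpow_of_mem_normalizer {G : Type*} [Group G] {C : Subgroup G}
    [IsCyclic C] {a : G} (ha : a ∈ Subgroup.normalizer C) :
    ∃ n : ℤ, ∀ c ∈ C, a * c * a⁻¹ = c ^ n := by
  obtain ⟨g, hg⟩ := IsCyclic.exists_generator (α := C)
  obtain ⟨n, hn⟩ := hg ⟨a * g * a⁻¹, (Subgroup.mem_normalizer_iff.mp ha g).mp g.2⟩
  refine ⟨n, fun c hc => ?_⟩
  obtain ⟨i, hi⟩ := hg ⟨c, hc⟩
  have hc' : c = (g : G) ^ i := (Subtype.ext_iff.mp hi).symm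
  have hn' : a * g * a⁻¹ = (g : G) ^ n := (Subtype.ext_iff.mp hn).symm
  rw [hc', ← conj_zpow, hn', ← zpow_mul, ← zpow_mul, mul_comm]

section Perm

variable {Ω : Type*}

theorem Setoid.IsPartition.image_eq {D : Set (Set Ω)} (hD : Setoid.IsPartition D)
    {f : Ω → Ω} {d d' : Set Ω} (hfd : f '' d ∈ D) (hd' : d' ∈ D) {x : Ω} (hx : x ∈ d)
    (hfx : f x ∈ d') : f '' d = d' :=
  Setoid.eq_of_mem_eqv_class hD.2 hfd (mem_image_of_mem f hx) hd' hfx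

/-- The stabilizer of the partition `{F, Fᶜ}`. -/
def partitionStabilizer (F : Set Ω) : Subgroup (Perm Ω) where
  carrier := {σ | ∀ x y, (σ x ∈ F ↔ σ y ∈ F) ↔ (x ∈ F ↔ y ∈ F)}
  one_mem' := fun _ _ => Iff.rfl
  mul_mem' := fun ha hb x y => (ha _ _).trans (hb x y)
  inv_mem' := by
    intro σ hσ x y
    simpa using (hσ (σ⁻¹ x) (σ⁻¹ y)).symm

theorem mem_iff_of_mem_partitionStabilizer {F : Set Ω} {σ : Perm Ω}
    (hσ : σ ∈ partitionStabilizer F) {u : Ω} (hu : σ u = u) (x : Ω) :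
    σ x ∈ F ↔ x ∈ F := by
  have := hσ u x
  rw [hu] at this
  tauto

theorem mem_iff_mem_of_subset_orbit {G : Subgroup (Perm Ω)} {F : Set Ω}
    (hG : G ≤ partitionStabilizer F) {u w : Ω} {B : Set Ω}
    (horb : B ⊆ {z | ∃ g ∈ G, g u = u ∧ g w = z}) {z z' : Ω} (hz : z ∈ B)
    (hz' : z' ∈ B) : z ∈ F ↔ z' ∈ F := by
  obtain ⟨s, hs, hsu, rfl⟩ := horb hz
  obtain ⟨s', hs', hs'u, rfl⟩ := horb hz'
  rw [mem_iff_of_mem_partitionStabilizer (hG hs) hsu,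
    mem_iff_of_mem_partitionStabilizer (hG hs') hs'u]

theorem mem_iff_mem_iff_exists_apply_eq {C : Subgroup (Perm Ω)} {F₁ F₂ : Set Ω}
    (hunion : F₁ ∪ F₂ = univ) (hdisj : Disjoint F₁ F₂)
    (horb₁ : ∀ x ∈ F₁, F₁ = {y | ∃ c ∈ C, c x = y})
    (horb₂ : ∀ x ∈ F₂, F₂ = {y | ∃ c ∈ C, c x = y}) (x y : Ω) :
    (x ∈ F₁ ↔ y ∈ F₁) ↔ ∃ c ∈ C, c x = y := by
  have hF₂ : ∀ z, z ∉ F₁ ↔ z ∈ F₂ := fun z => by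
    have hz : z ∈ F₁ ∪ F₂ := hunion ▸ mem_univ z
    exact ⟨hz.resolve_left, fun h => Set.disjoint_right.mp hdisj h⟩
  by_cases hx : x ∈ F₁
  · simpa only [hx, true_iff, mem_ofPred_eq] using Set.ext_iff.mp (horb₁ x hx) y
  · simpa only [hx, false_iff, hF₂, mem_ofPred_eq] using
      Set.ext_iff.mp (horb₂ x ((hF₂ x).mp hx)) y

theorem exists_mem_apply_eq_iff_of_mem_normalizer {C : Subgroup (Perm Ω)} {r : Perm Ω}
    (hr : r ∈ Subgroup.normalizer C) (x y : Ω) :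
    (∃ c ∈ C, c (r x) = r y) ↔ ∃ c ∈ C, c x = y := by
  constructor
  · rintro ⟨c, hc, hcxy⟩
    exact ⟨r⁻¹ * c * r, (Subgroup.mem_normalizer_iff''.mp hr c).mp hc, by simp [hcxy]⟩
  · rintro ⟨c, hc, rfl⟩
    exact ⟨r * c * r⁻¹, (Subgroup.mem_normalizer_iff.mp hr c).mp hc, by simp⟩

theorem le_partitionStabilizer {C R : Subgroup (Perm Ω)} {F : Set Ω}
    (hside : ∀ x y, (x ∈ F ↔ y ∈ F) ↔ ∃ c ∈ C, c x = y)
    (hR : R ≤ Subgroup.normalizer C) : R ≤ partitionStabilizer F := by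
  intro r hr x y
  rw [hside, hside]
  exact exists_mem_apply_eq_iff_of_mem_normalizer (hR hr) x y

theorem mem_of_exists_mem_apply_eq {C R : Subgroup (Perm Ω)} (hCR : C ≤ R)
    (hreg : ∀ x y : Ω, ∃! g : R, (g : Perm Ω) x = y) {r : Perm Ω} (hr : r ∈ R) {x : Ω}
    (h : ∃ c ∈ C, c x = r x) : r ∈ C := by
  obtain ⟨c, hc, hcx⟩ := h
  have hcr : c = r :=
    Subtype.ext_iff.mp <|
      (hreg x (r x)).unique (y₁ := ⟨c, hCR hc⟩) (y₂ := ⟨r, hr⟩) hcx rfl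
  exact hcr ▸ hc

theorem smul_smul_eq_smul_of_mem_normalizer {C : Subgroup (Perm Ω)} [IsCyclic C]
    {a r : Perm Ω} (ha : a ∈ Subgroup.normalizer C) (hr : r ∈ C) {D : Set Ω}
    (hrD : r • D = D) : r • a • D = a • D := by
  obtain ⟨n, hn⟩ := Subgroup.exists_conj_eq_zpow_of_mem_normalizer (inv_mem ha)
  have hstab : r ^ n ∈ MulAction.stabilizer (Perm Ω) D :=
    zpow_mem (MulAction.mem_stabilizer_iff.mpr hrD) n
  rw [← hn r hr, inv_inv, MulAction.mem_stabilizer_iff] at hstab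
  calc r • a • D = a • (a⁻¹ * r * a) • D := by
        simp only [smul_smul, mul_assoc, mul_inv_cancel_left]
    _ = a • D := by rw [hstab]

theorem exists_mem_apply_eq_of_subset_orbit {G : Subgroup (Perm Ω)} {u w : Ω}
    {B : Set Ω} (horb : B ⊆ {z | ∃ g ∈ G, g u = u ∧ g w = z}) {r : Perm Ω} (hr : r ∈ G)
    (hrB : r • B = B) {v v' : Ω} (hv : v ∈ B) (hv' : v' ∈ B) :
    ∃ h ∈ G, h u = r u ∧ h v = v' := by
  obtain ⟨s, hs, hsu, rfl⟩ := horb hv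
  have hv'' : r⁻¹ v' ∈ B := by
    rw [← inv_smul_eq_iff.mpr hrB.symm]
    exact smul_mem_smul_set hv'
  obtain ⟨s', hs', hs'u, hs'w⟩ := horb hv''
  refine ⟨r * s' * s⁻¹, mul_mem (mul_mem hr hs') (inv_mem hs), ?_, ?_⟩
  · rw [Perm.mul_apply, Perm.mul_apply, Perm.inv_eq_iff_eq.mpr hsu.symm, hs'u]
  · simp [hs'w]

end Perm

namespace DihedralPairSetup

variable {Ω : Type*} (S : DihedralPairSetup Ω)

theorem sup_le_partitionStabilizer : S.R₁ ⊔ S.R₂ ≤ partitionStabilizer S.F₁ :=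
  sup_le
    (le_partitionStabilizer (mem_iff_mem_iff_exists_apply_eq S.union_eq S.disj S.orb₁ S.orb₁')
      (Subgroup.le_normalizer_of_relIndex_eq_two S.hC₁ S.idx₁))
    (le_partitionStabilizer (mem_iff_mem_iff_exists_apply_eq S.union_eq S.disj S.orb₂ S.orb₂')
      (Subgroup.le_normalizer_of_relIndex_eq_two S.hC₂ S.idx₂))

theorem mem_C₁_of_mem_iff {r : Perm Ω} (hr : r ∈ S.R₁) {x : Ω}
    (h : x ∈ S.F₁ ↔ r x ∈ S.F₁) : r ∈ S.C₁ :=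
  mem_of_exists_mem_apply_eq S.hC₁ S.reg₁ hr
    ((mem_iff_mem_iff_exists_apply_eq S.union_eq S.disj S.orb₁ S.orb₁' x (r x)).mp h)

end DihedralPairSetup

theorem stmt_13_general {Ω : Type*} (S : DihedralPairSetup Ω)
    (G : Subgroup (Equiv.Perm Ω)) (hG : G = S.R₁ ⊔ S.R₂)
    (D : Set (Set Ω)) (hD : Setoid.IsPartition D)
    (hDinv : ∀ d ∈ D, ∀ g ∈ G, (⇑g) '' d ∈ D)
    (β : Equiv.Perm Ω)
    (u v : Ω) (Du Dv : Set Ω) (hDu : Du ∈ D) (hDv : Dv ∈ D)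
    (huDu : u ∈ Du) (hvDv : v ∈ Dv)
    (hg : ∃ g ∈ G, (⇑β) '' Du = (⇑g) '' Du ∧ (⇑β) '' Dv = (⇑g) '' Dv)
    (horb : ∃ w : Ω, Dv ⊆ {z : Ω | ∃ g ∈ G, g u = u ∧ g w = z}) :
    ∃ h ∈ G, β u = h u ∧ β v = h v := by
  obtain ⟨g, hgG, hgDu, hgDv⟩ := hg
  obtain ⟨w, hw⟩ := horb
  obtain ⟨u', hu', hgu'⟩ : β u ∈ ⇑g '' Du := hgDu ▸ mem_image_of_mem β huDu
  obtain ⟨v', hv', hgv'⟩ : β v ∈ ⇑g '' Dv := hgDv ▸ mem_image_of_mem β hvDv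
  obtain ⟨⟨r, hrR⟩, hru⟩ := (S.reg₁ u u').exists
  obtain ⟨⟨a, haR⟩, hau⟩ := (S.reg₁ u v).exists
  have hR₁G : S.R₁ ≤ G := hG ▸ le_sup_left
  have hGF : G ≤ partitionStabilizer S.F₁ := hG ▸ S.sup_le_partitionStabilizer
  have haD : a • Du = Dv :=
    hD.image_eq (f := a) (hDinv Du hDu a (hR₁G haR)) hDv huDu (hau ▸ hvDv)
  have hrD : r • Du = Du :=
    hD.image_eq (f := r) (hDinv Du hDu r (hR₁G hrR)) hDu huDu (hru ▸ hu')
  have hside : u ∈ S.F₁ ↔ u' ∈ S.F₁ := (hGF (hR₁G haR) u u').mp <|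
    hau ▸ mem_iff_mem_of_subset_orbit hGF hw hvDv (haD ▸ smul_mem_smul_set hu')
  have hrC : r ∈ S.C₁ := S.mem_C₁_of_mem_iff hrR (hru ▸ hside)
  have := S.cyc₁
  have hrDv : r • Dv = Dv := haD ▸ smul_smul_eq_smul_of_mem_normalizer
    (Subgroup.le_normalizer_of_relIndex_eq_two S.hC₁ S.idx₁ haR) hrC hrD
  obtain ⟨h, hhG, hhu, hhv⟩ := exists_mem_apply_eq_of_subset_orbit hw (hR₁G hrR) hrDv hvDv hv'
  exact ⟨g * h, mul_mem hgG hhG, by simp [hhu, hru, hgu'], by simp [hhv, hgv']⟩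

/-- 2-closure membership criterion: if β fixes F₁, F₂ setwise, agrees with
some g ∈ G on the blocks D_u, D_v of a G-invariant partition D, and D_v lies
in a single orbit of G_u, then β agrees with some h ∈ G on the pair (u, v). -/
theorem stmt_13 {Ω : Type*} (S : DihedralPairSetup Ω)
    (G : Subgroup (Equiv.Perm Ω)) (hG : G = S.R₁ ⊔ S.R₂)
    (D : Set (Set Ω)) (hD : Setoid.IsPartition D)
    (hDinv : ∀ d ∈ D, ∀ g ∈ G, (⇑g) '' d ∈ D)
    (β : Equiv.Perm Ω)
    (hβ₁ : ∀ x ∈ S.F₁, β x ∈ S.F₁) (hβ₂ : ∀ x ∈ S.F₂, β x ∈ S.F₂)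
    (u v : Ω) (Du Dv : Set Ω) (hDu : Du ∈ D) (hDv : Dv ∈ D)
    (huDu : u ∈ Du) (hvDv : v ∈ Dv)
    (hg : ∃ g ∈ G, (⇑β) '' Du = (⇑g) '' Du ∧ (⇑β) '' Dv = (⇑g) '' Dv)
    (horb : ∃ w : Ω, Dv ⊆ {z : Ω | ∃ g ∈ G, g u = u ∧ g w = z}) :
    ∃ h ∈ G, β u = h u ∧ β v = h v :=
  stmt_13_general S G hG D hD hDinv β u v Du Dv hDu hDv huDu hvDv hg horb
end

section
/- Let G = ⟨R_r, R_r^π⟩ with R_r, R_r^π regular dihedral groups of squarefree order 2k on Ω whose cyclic halves C_r, C_r^π share the orbits F₁, F₂. Suppose F₂ is a single orbit of the point stabilizer G_x for some x ∈ F₁, and suppose cyclic groups of squarefree order are CI^(2) groups. Then there exists β ∈ G^(2) such that R_r^{πβ} = R_r. -/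
universe u

/-- The 2-closure of a permutation group, as a set of permutations agreeing
with some group element on every ordered pair. -/
def twoClosure {Ω : Type*} (G : Subgroup (Equiv.Perm Ω)) : Set (Equiv.Perm Ω) :=
  {β | ∀ x y : Ω, ∃ g ∈ G, β x = g x ∧ β y = g y}

/-!
Restricted to `F₁`, the cyclic halves `C₁` and `C₂` are regular cyclic groups of squarefree
order `k`, so the CI^(2) hypothesis gives a permutation `β₁` of `F₁`, lying in the 2-closure of
the group they generate there, that conjugates one onto the other. Elements `t₁ ∈ R₁ \ C₁` and
`t₂ ∈ R₂ \ C₂` are reflections: they swap `F₁` and `F₂` and invert `C₁`, resp. `C₂`. Extending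
`β₁` by `t₂ β₁ t₁` on `F₂` gives `β` with `β⁻¹ C₂ β ≤ C₁` and `β⁻¹ t₂ β = t₁`, hence
`β⁻¹ R₂ β = R₁` as both have order `2k`. A pair of points of the same half is matched by an
element of `G` through the 2-closure property of `β₁` (transported by the reflections for `F₂`);
for a mixed pair `(u, v)` one corrects on `F₂` with the stabilizer `G_u`, which is transitive
on `F₂` because `G_x` is and `C₁` is transitive on `F₁`.
-/

open Equiv MulAction Set
open scoped Pointwise

namespace DihedralGroup

variable {n : ℕ} {H : Subgroup (DihedralGroup n)}

theorem sr_notMem_of_index_eq_two (hn : Odd n) (hH : H.index = 2) (i : ZMod n) : sr i ∉ H := by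
  intro h
  have hcard := H.card_mul_index
  rw [nat_card, hH] at hcard
  have h2 : 2 ∣ Nat.card H := orderOf_sr i ▸ H.orderOf_dvd_natCard h
  obtain ⟨m, rfl⟩ := hn
  omega

theorem r_mem_of_index_eq_two (hn : Odd n) (hH : H.index = 2) (i : ZMod n) : r i ∈ H := by
  have h := Subgroup.mul_mem_iff_of_index_two hH (a := sr 0) (b := sr i)
  rw [sr_mul_sr, sub_zero] at h
  exact h.2 (iff_of_false (sr_notMem_of_index_eq_two hn hH 0) (sr_notMem_of_index_eq_two hn hH i))

variable {M : Type*} [Group M] {K : Subgroup M}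

theorem exists_eq_r_of_mem_s15 (e : M ≃* DihedralGroup n) (hn : Odd n) (hK : K.index = 2) {c : M}
    (hc : c ∈ K) : ∃ j, e c = r j := by
  have hK' : (K.map e.toMonoidHom).index = 2 := (K.index_map_equiv e).trans hK
  rcases hec : e c with j | j
  · exact ⟨j, rfl⟩
  · refine absurd ?_ (sr_notMem_of_index_eq_two hn hK' j)
    exact hec ▸ Subgroup.mem_map_of_mem _ hc

theorem exists_eq_sr_of_notMem_s15 (e : M ≃* DihedralGroup n) (hn : Odd n) (hK : K.index = 2) {t : M}
    (ht : t ∉ K) : ∃ i, e t = sr i := by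
  have hK' : (K.map e.toMonoidHom).index = 2 := (K.index_map_equiv e).trans hK
  rcases het : e t with i | i
  · refine absurd ?_ ht
    have := het ▸ r_mem_of_index_eq_two hn hK' i
    simpa [Subgroup.mem_map_equiv] using this
  · exact ⟨i, rfl⟩

theorem mul_self_eq_one_of_notMem (e : M ≃* DihedralGroup n) (hn : Odd n) (hK : K.index = 2)
    {t : M} (ht : t ∉ K) : t * t = 1 := by
  obtain ⟨i, hi⟩ := exists_eq_sr_of_notMem_s15 e hn hK ht
  apply e.injective
  rw [map_mul, hi, sr_mul_self, map_one]

theorem conj_eq_inv_of_notMem (e : M ≃* DihedralGroup n) (hn : Odd n) (hK : K.index = 2)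
    {t : M} (ht : t ∉ K) {c : M} (hc : c ∈ K) : t * c * t⁻¹ = c⁻¹ := by
  obtain ⟨i, hi⟩ := exists_eq_sr_of_notMem_s15 e hn hK ht
  obtain ⟨j, hj⟩ := exists_eq_r_of_mem_s15 e hn hK hc
  apply e.injective
  rw [map_mul, map_mul, map_inv, map_inv, hi, hj, inv_sr, inv_r, sr_mul_r, sr_mul_sr]
  congr 1
  ring

end DihedralGroup

section Perm

variable {α : Type*}

theorem Subgroup.existsUnique_apply_eq_of_isMulCommutative {A : Subgroup (Perm α)}
    [IsMulCommutative A] (htrans : ∀ a b : α, ∃ g : A, (g : Perm α) a = b) (a b : α) :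
    ∃! g : A, (g : Perm α) a = b := by
  obtain ⟨g, rfl⟩ := htrans a b
  refine ⟨g, rfl, fun g' hg' => ?_⟩
  rw [← inv_mul_eq_one]
  refine Subtype.ext (Equiv.ext fun y => ?_)
  obtain ⟨f, rfl⟩ := htrans a y
  have hfix : ((g'⁻¹ * g : A) : Perm α) a = a := by
    simp [Perm.mul_apply, ← hg']
  have hcomm : g'⁻¹ * g * f = f * (g'⁻¹ * g) := isMulCommutative_iff.mp ‹_› _ _
  calc ((g'⁻¹ * g : A) : Perm α) ((f : Perm α) a) = ((g'⁻¹ * g * f : A) : Perm α) a := rfl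
    _ = ((f * (g'⁻¹ * g) : A) : Perm α) a := by rw [hcomm]
    _ = (f : Perm α) a := congrArg (f : Perm α) hfix

namespace Subgroup

def induced (H : Subgroup (Perm α)) (s : Set α) : Subgroup (Perm s) :=
  (H.subgroupOf (stabilizer (Perm α) s)).map (toPermHom _ s)

variable {H K : Subgroup (Perm α)} {s : Set α}

theorem exists_of_mem_induced {g : Perm s} (hg : g ∈ H.induced s) :
    ∃ h ∈ H, ∀ ω : s, (g ω : α) = h ω := by
  obtain ⟨⟨h, hs⟩, hh, rfl⟩ := hg
  exact ⟨h, mem_subgroupOf.mp hh, fun ω => rfl⟩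

theorem subtypePerm_mem_induced {h : Perm α} (hH : h ∈ H) (hs : ∀ ω, h ω ∈ s ↔ ω ∈ s) :
    h.subtypePerm hs ∈ H.induced s :=
  ⟨⟨h, mem_stabilizer_set.2 hs⟩, hH, rfl⟩

theorem induced_sup (hH : H ≤ stabilizer (Perm α) s) (hK : K ≤ stabilizer (Perm α) s) :
    (H ⊔ K).induced s = H.induced s ⊔ K.induced s := by
  rw [induced, subgroupOf_sup hH hK, map_sup, induced, induced]

theorem isCyclic_induced [IsCyclic H] (hH : H ≤ stabilizer (Perm α) s) :
    IsCyclic (H.induced s) :=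
  have := isCyclic_of_surjective _ (subgroupOfEquivOfLe hH).symm.surjective
  isCyclic_of_surjective _ ((toPermHom _ s).subgroupMap_surjective _)

theorem existsUnique_induced_apply_eq [IsCyclic H] (hH : H ≤ stabilizer (Perm α) s)
    (htrans : ∀ a ∈ s, ∀ b ∈ s, ∃ g ∈ H, g a = b) (a b : s) :
    ∃! g : H.induced s, (g : Perm s) a = b := by
  have := isCyclic_induced hH
  refine existsUnique_apply_eq_of_isMulCommutative (fun a b => ?_) a b
  obtain ⟨g, hg, hab⟩ := htrans a a.2 b b.2
  exact ⟨⟨_, subtypePerm_mem_induced hg (mem_stabilizer_set.1 (hH hg))⟩, Subtype.ext hab⟩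

theorem conj_mem_iff_of_forall_conj_mem {M : Type*} [Group M] {H K : Subgroup M} [Finite K]
    (hcard : Nat.card K ≤ Nat.card H) {b : M} (hle : ∀ g ∈ H, b⁻¹ * g * b ∈ K) (g : M) :
    g ∈ H ↔ b⁻¹ * g * b ∈ K := by
  have hmap : H.map (MulAut.conj b⁻¹).toMonoidHom = K := by
    refine eq_of_le_of_card_ge ?_ ?_
    · rintro _ ⟨g, hg, rfl⟩
      simpa using hle g hg
    · rwa [card_map_of_injective (MulEquiv.injective _)]
  rw [← hmap, mem_map_equiv]
  simp [mul_assoc]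

end Subgroup

theorem Equiv.Perm.exists_eqOn_eqOn_compl {s : Set α} {f g : Perm α}
    (hf : f ∈ stabilizer (Perm α) s) (hg : g ∈ stabilizer (Perm α) s) :
    ∃ β : Perm α, EqOn β f s ∧ EqOn β g sᶜ := by
  classical
  rw [mem_stabilizer_set] at hf hg
  exact ⟨subtypeCongr (f.subtypePerm hf) (g.subtypePerm fun ω => not_congr (hg ω)),
    fun ω hω => subtypeCongr.left_apply _ _ hω, fun ω hω => subtypeCongr.right_apply _ _ hω⟩

end Perm

namespace DihedralPairSetup

variable {Ω : Type*} (S : DihedralPairSetup Ω)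

def symm : DihedralPairSetup Ω where
  R₁ := S.R₂
  R₂ := S.R₁
  C₁ := S.C₂
  C₂ := S.C₁
  F₁ := S.F₁
  F₂ := S.F₂
  k := S.k
  k_odd := S.k_odd
  k_squarefree := S.k_squarefree
  k_ge := S.k_ge
  card_eq := S.card_eq
  dih₁ := S.dih₂
  dih₂ := S.dih₁
  reg₁ := S.reg₂
  reg₂ := S.reg₁
  hC₁ := S.hC₂
  hC₂ := S.hC₁
  cyc₁ := S.cyc₂
  cyc₂ := S.cyc₁
  idx₁ := S.idx₂
  idx₂ := S.idx₁
  union_eq := S.union_eq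
  disj := S.disj
  ne₁ := S.ne₁
  ne₂ := S.ne₂
  orb₁ := S.orb₂
  orb₁' := S.orb₂'
  orb₂ := S.orb₁
  orb₂' := S.orb₁'

theorem mem_F₂_iff {ω : Ω} : ω ∈ S.F₂ ↔ ω ∉ S.F₁ := by
  have h : ω ∈ S.F₁ ∪ S.F₂ := S.union_eq ▸ mem_univ ω
  exact ⟨fun h₂ h₁ => S.disj.notMem_of_mem_left h₁ h₂, h.resolve_left⟩

theorem exists_mem_C₁_apply_eq_iff (ω ω' : Ω) :
    (∃ c ∈ S.C₁, c ω = ω') ↔ (ω' ∈ S.F₁ ↔ ω ∈ S.F₁) := by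
  by_cases hω : ω ∈ S.F₁
  · simp only [hω, iff_true]
    rw [S.orb₁ ω hω]
    rfl
  · simp only [hω, iff_false, ← S.mem_F₂_iff]
    rw [S.orb₁' ω (S.mem_F₂_iff.2 hω)]
    rfl

theorem C₁_le_stabilizer : S.C₁ ≤ stabilizer (Perm Ω) S.F₁ := fun c hc =>
  mem_stabilizer_set.2 fun ω => (S.exists_mem_C₁_apply_eq_iff ω (c ω)).1 ⟨c, hc, rfl⟩

theorem apply_mem_F₁_iff {c : Perm Ω} (hc : c ∈ S.C₁) (ω : Ω) : c ω ∈ S.F₁ ↔ ω ∈ S.F₁ :=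
  mem_stabilizer_set.1 (S.C₁_le_stabilizer hc) ω

theorem card_R₁ : Nat.card S.R₁ = 2 * S.k :=
  (Nat.card_congr S.dih₁.some.toEquiv).trans DihedralGroup.nat_card

/-- Since `k` is odd, `C₁` is the rotation subgroup of `R₁`, so these are its reflections. -/
def IsReflection (t : Perm Ω) : Prop := t ∈ S.R₁ ∧ t ∉ S.C₁

theorem exists_isReflection : ∃ t, S.IsReflection t := by
  obtain ⟨x, hx⟩ := S.ne₁
  obtain ⟨z, hz⟩ := S.ne₂
  obtain ⟨⟨t, ht⟩, htxz, -⟩ := S.reg₁ x z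
  refine ⟨t, ht, fun htC => (S.mem_F₂_iff.1 hz) ?_⟩
  exact htxz ▸ (S.apply_mem_F₁_iff htC x).2 hx

namespace IsReflection

variable {S} {t : Perm Ω}

theorem apply_ne (ht : S.IsReflection t) {c : Perm Ω} (hc : c ∈ S.C₁) (ω : Ω) : t ω ≠ c ω := by
  intro h
  obtain ⟨g, -, hg⟩ := S.reg₁ ω (t ω)
  have htc : t = c := congrArg Subtype.val
    ((hg ⟨t, ht.1⟩ rfl).trans (hg ⟨c, S.hC₁ hc⟩ h.symm).symm)
  exact ht.2 (htc ▸ hc)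

theorem mem_F₁_iff (ht : S.IsReflection t) (ω : Ω) : t ω ∈ S.F₁ ↔ ω ∉ S.F₁ := by
  have h : ¬(t ω ∈ S.F₁ ↔ ω ∈ S.F₁) := fun h => by
    obtain ⟨c, hc, hct⟩ := (S.exists_mem_C₁_apply_eq_iff ω (t ω)).2 h
    exact ht.apply_ne hc ω hct.symm
  tauto

theorem apply_mem (ht : S.IsReflection t) {ω : Ω} (hω : ω ∉ S.F₁) : t ω ∈ S.F₁ :=
  (ht.mem_F₁_iff ω).2 hω

theorem apply_notMem (ht : S.IsReflection t) {ω : Ω} (hω : ω ∈ S.F₁) : t ω ∉ S.F₁ :=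
  fun h => (ht.mem_F₁_iff ω).1 h hω

theorem notMem_subgroupOf (ht : S.IsReflection t) :
    (⟨t, ht.1⟩ : S.R₁) ∉ S.C₁.subgroupOf S.R₁ :=
  ht.2

theorem mul_self (ht : S.IsReflection t) : t * t = 1 :=
  congrArg Subtype.val
    (DihedralGroup.mul_self_eq_one_of_notMem S.dih₁.some S.k_odd S.idx₁ ht.notMem_subgroupOf)

theorem conj_eq_inv (ht : S.IsReflection t) {c : Perm Ω} (hc : c ∈ S.C₁) :
    t * c * t⁻¹ = c⁻¹ :=
  congrArg Subtype.val (DihedralGroup.conj_eq_inv_of_notMem S.dih₁.some S.k_odd S.idx₁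
    ht.notMem_subgroupOf (c := ⟨c, S.hC₁ hc⟩) hc)

theorem apply_apply (ht : S.IsReflection t) (ω : Ω) : t (t ω) = ω := by
  rw [← Perm.mul_apply, ht.mul_self, Perm.one_apply]

theorem apply_apply_eq (ht : S.IsReflection t) {c : Perm Ω} (hc : c ∈ S.C₁) (ω : Ω) :
    t (c ω) = c⁻¹ (t ω) := by
  rw [← ht.conj_eq_inv hc]
  simp only [Perm.mul_apply, Perm.coe_inv, symm_apply_apply]

theorem mul_mem {g : Perm Ω} (hg : S.IsReflection g) (ht : S.IsReflection t) : g * t ∈ S.C₁ :=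
  (Subgroup.mul_mem_iff_of_index_two S.idx₁).2
    (iff_of_false hg.notMem_subgroupOf ht.notMem_subgroupOf)

end IsReflection

theorem card_F₁ : Nat.card S.F₁ = S.k := by
  obtain ⟨t, ht⟩ := S.exists_isReflection
  have : Finite Ω := Nat.finite_of_card_ne_zero (by rw [S.card_eq]; have := S.k_ge; omega)
  have hswap : Nat.card S.F₁ = Nat.card (S.F₁ᶜ : Set Ω) :=
    Nat.card_congr (t.subtypeEquiv fun ω => by simp [ht.mem_F₁_iff])
  have hsum := Set.ncard_add_ncard_compl S.F₁
  rw [← Nat.card_coe_set_eq, ← Nat.card_coe_set_eq, ← hswap, S.card_eq] at hsum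
  omega

theorem existsUnique_induced_C₁_apply_eq (a b : S.F₁) :
    ∃! g : S.C₁.induced S.F₁, (g : Perm S.F₁) a = b :=
  have := S.cyc₁
  Subgroup.existsUnique_induced_apply_eq S.C₁_le_stabilizer
    (fun a ha b hb => (S.exists_mem_C₁_apply_eq_iff a b).2 (iff_of_true hb ha)) a b

theorem exists_local_conjugator
    (hCI : ∀ A B : Subgroup (Perm S.F₁), IsCyclic A → IsCyclic B → Squarefree (Nat.card S.F₁) →
      (∀ a b : S.F₁, ∃! g : A, (g : Perm S.F₁) a = b) →
      (∀ a b : S.F₁, ∃! g : B, (g : Perm S.F₁) a = b) →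
      ∃ β ∈ twoClosure (A ⊔ B), ∀ g : Perm S.F₁, g ∈ B ↔ β⁻¹ * g * β ∈ A) :
    ∃ β₀ ∈ stabilizer (Perm Ω) S.F₁,
      (∀ c ∈ S.C₂, ∃ a ∈ S.C₁, EqOn (c * β₀) (β₀ * a) S.F₁) ∧
      ∀ u ∈ S.F₁, ∀ v ∈ S.F₁, ∃ p ∈ S.C₁ ⊔ S.C₂, β₀ u = p u ∧ β₀ v = p v := by
  classical
  have := S.cyc₁
  have : IsCyclic S.symm.C₁ := S.cyc₂
  obtain ⟨β₁, hcl, hconj⟩ := hCI _ _ (Subgroup.isCyclic_induced S.C₁_le_stabilizer)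
    (Subgroup.isCyclic_induced S.symm.C₁_le_stabilizer) (S.card_F₁ ▸ S.k_squarefree)
    S.existsUnique_induced_C₁_apply_eq S.symm.existsUnique_induced_C₁_apply_eq
  refine ⟨Perm.ofSubtype β₁, Perm.ofSubtype_mem_stabilizer β₁, fun c hc => ?_, fun u hu v hv => ?_⟩
  · have hcF : ∀ ω, c ω ∈ S.F₁ ↔ ω ∈ S.F₁ := S.symm.apply_mem_F₁_iff hc
    obtain ⟨a, ha, hβa⟩ := Subgroup.exists_of_mem_induced
      ((hconj _).1 (Subgroup.subtypePerm_mem_induced hc hcF))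
    refine ⟨a, ha, fun ω hω => ?_⟩
    have haω : (⟨a ω, (S.apply_mem_F₁_iff ha ω).2 hω⟩ : S.F₁) =
        (β₁⁻¹ * c.subtypePerm hcF * β₁) ⟨ω, hω⟩ :=
      Subtype.ext (hβa ⟨ω, hω⟩).symm
    simp only [Perm.mul_apply, Perm.ofSubtype_apply_of_mem β₁ hω,
      Perm.ofSubtype_apply_of_mem β₁ ((S.apply_mem_F₁_iff ha ω).2 hω), haω, Perm.coe_inv,
      apply_symm_apply]
    rfl
  · obtain ⟨g, hg, hgu, hgv⟩ := hcl ⟨u, hu⟩ ⟨v, hv⟩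
    rw [← Subgroup.induced_sup S.C₁_le_stabilizer S.symm.C₁_le_stabilizer] at hg
    obtain ⟨p, hp, hpg⟩ := Subgroup.exists_of_mem_induced hg
    exact ⟨p, hp, by rw [Perm.ofSubtype_apply_of_mem β₁ hu, hgu, hpg],
      by rw [Perm.ofSubtype_apply_of_mem β₁ hv, hgv, hpg]⟩

theorem exists_mem_fixing_apply_eq {G : Subgroup (Perm Ω)} (hCG : S.C₁ ≤ G) {x : Ω}
    (hx : x ∈ S.F₁) (horb : ∃ z₀ : Ω, S.F₂ = {w : Ω | ∃ g ∈ G, g x = x ∧ g z₀ = w}) :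
    ∀ u ∈ S.F₁, ∀ v ∉ S.F₁, ∀ w ∉ S.F₁, ∃ s ∈ G, s u = u ∧ s v = w := by
  intro u hu v hv w hw
  obtain ⟨z₀, hz⟩ := horb
  have hstab : ∀ v ∉ S.F₁, ∃ g ∈ G, g x = x ∧ g z₀ = v := fun v hv => by
    rw [← S.mem_F₂_iff, hz] at hv
    exact hv
  obtain ⟨c, hc, rfl⟩ := (S.exists_mem_C₁_apply_eq_iff x u).2 (iff_of_true hu hx)
  have hc' := S.apply_mem_F₁_iff (inv_mem hc)
  obtain ⟨g₁, hg₁, hg₁x, hg₁z⟩ := hstab (c⁻¹ v) (by rwa [hc'])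
  obtain ⟨g₂, hg₂, hg₂x, hg₂z⟩ := hstab (c⁻¹ w) (by rwa [hc'])
  have hcG := hCG hc
  refine ⟨c * g₂ * g₁⁻¹ * c⁻¹, mul_mem (mul_mem (mul_mem hcG hg₂) (inv_mem hg₁)) (inv_mem hcG),
    ?_, ?_⟩
  · simp [Perm.mul_apply, Perm.inv_eq_iff_eq.2 hg₁x.symm, hg₂x]
  · have hz₀ : g₁⁻¹ (c⁻¹ v) = z₀ := Perm.inv_eq_iff_eq.2 hg₁z.symm
    simp only [Perm.mul_apply, hz₀, hg₂z]
    simp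

section Extension

variable {t₁ t₂ β₀ β : Perm Ω}

theorem mul_mul_mem_stabilizer (h₁ : S.IsReflection t₁) (h₂ : S.symm.IsReflection t₂)
    (hβ₀ : β₀ ∈ stabilizer (Perm Ω) S.F₁) : t₂ * β₀ * t₁ ∈ stabilizer (Perm Ω) S.F₁ := by
  have h₂F : ∀ ω, t₂ ω ∈ S.F₁ ↔ ω ∉ S.F₁ := h₂.mem_F₁_iff
  have hβ₀F : ∀ ω, β₀ ω ∈ S.F₁ ↔ ω ∈ S.F₁ := mem_stabilizer_set.1 hβ₀
  refine mem_stabilizer_set.2 fun ω => ?_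
  simp [Perm.smul_def, Perm.mul_apply, h₂F, hβ₀F, h₁.mem_F₁_iff]

theorem reflection_mul_eq_mul_reflection (h₁ : S.IsReflection t₁) (h₂ : S.symm.IsReflection t₂)
    (hβ : EqOn β β₀ S.F₁) (hβ' : EqOn β (t₂ * β₀ * t₁) S.F₁ᶜ) : t₂ * β = β * t₁ := by
  ext ω
  simp only [Perm.mul_apply]
  by_cases hω : ω ∈ S.F₁
  · rw [hβ hω, hβ' (h₁.apply_notMem hω)]
    simp only [Perm.mul_apply, h₁.apply_apply]
  · rw [hβ' hω, hβ (h₁.apply_mem hω)]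
    simp only [Perm.mul_apply, h₂.apply_apply]

theorem mul_eq_mul_of_eqOn (h₁ : S.IsReflection t₁) (h₂ : S.symm.IsReflection t₂)
    (hβ : EqOn β β₀ S.F₁) (hβ' : EqOn β (t₂ * β₀ * t₁) S.F₁ᶜ) {c a : Perm Ω} (hc : c ∈ S.C₂)
    (ha : a ∈ S.C₁) (hca : EqOn (c * β₀) (β₀ * a) S.F₁) : c * β = β * a := by
  ext ω
  simp only [Perm.mul_apply]
  by_cases hω : ω ∈ S.F₁
  · rw [hβ hω, hβ ((S.apply_mem_F₁_iff ha ω).2 hω)]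
    exact hca hω
  · have hinv : c⁻¹ (β₀ (t₁ ω)) = β₀ (a⁻¹ (t₁ ω)) := by
      have := hca ((S.apply_mem_F₁_iff (inv_mem ha) _).2 (h₁.apply_mem hω))
      simp only [Perm.mul_apply, Perm.coe_inv, apply_symm_apply] at this
      rw [← this, Perm.coe_inv, symm_apply_apply, Perm.coe_inv]
    rw [hβ' hω, hβ' ((S.apply_mem_F₁_iff ha ω).not.2 hω)]
    simp only [Perm.mul_apply]
    rw [h₁.apply_apply_eq ha, ← hinv, h₂.apply_apply_eq (inv_mem hc), inv_inv]

theorem conj_mem_R₁ (h₁ : S.IsReflection t₁) (h₂ : S.symm.IsReflection t₂)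
    (hrefl : t₂ * β = β * t₁) (hcomm : ∀ c ∈ S.C₂, ∃ a ∈ S.C₁, c * β = β * a) {g : Perm Ω}
    (hg : g ∈ S.R₂) : β⁻¹ * g * β ∈ S.R₁ := by
  have hC : ∀ c ∈ S.C₂, β⁻¹ * c * β ∈ S.C₁ := fun c hc => by
    obtain ⟨a, ha, hca⟩ := hcomm c hc
    rwa [mul_assoc, hca, inv_mul_cancel_left]
  by_cases hgC : g ∈ S.C₂
  · exact S.hC₁ (hC g hgC)
  · have hgt : g * t₂ ∈ S.C₂ := IsReflection.mul_mem (S := S.symm) ⟨hg, hgC⟩ h₂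
    have hsplit : β⁻¹ * g * β = (β⁻¹ * (g * t₂) * β) * (β⁻¹ * t₂ * β) := by
      simp only [mul_assoc, mul_inv_cancel_left]
      rw [← mul_assoc t₂ t₂ β, h₂.mul_self, one_mul]
    rw [hsplit, mul_assoc β⁻¹ t₂ β, hrefl, inv_mul_cancel_left]
    exact mul_mem (S.hC₁ (hC _ hgt)) h₁.1

theorem mem_twoClosure {G : Subgroup (Perm Ω)} (hG : G = S.R₁ ⊔ S.R₂)
    (h₁ : S.IsReflection t₁) (h₂ : S.symm.IsReflection t₂)
    (hβ : EqOn β β₀ S.F₁) (hβ' : EqOn β (t₂ * β₀ * t₁) S.F₁ᶜ)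
    (htrans : ∀ u ∈ S.F₁, ∀ v ∉ S.F₁, ∀ w ∉ S.F₁, ∃ s ∈ G, s u = u ∧ s v = w)
    (hpair : ∀ u ∈ S.F₁, ∀ v ∈ S.F₁, ∃ p ∈ S.C₁ ⊔ S.C₂, β₀ u = p u ∧ β₀ v = p v) :
    β ∈ twoClosure G := by
  have hCG : S.C₁ ⊔ S.C₂ ≤ G := hG ▸ sup_le_sup S.hC₁ S.hC₂
  have hCF : ∀ p ∈ S.C₁ ⊔ S.C₂, ∀ ω, p ω ∈ S.F₁ ↔ ω ∈ S.F₁ := fun p hp =>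
    mem_stabilizer_set.1 (sup_le S.C₁_le_stabilizer S.symm.C₁_le_stabilizer hp)
  have hmixed : ∀ u ∈ S.F₁, ∀ v ∉ S.F₁, ∃ g ∈ G, β u = g u ∧ β v = g v := by
    intro u hu v hv
    obtain ⟨p, hp, hpu, hpv⟩ := hpair u hu (t₁ v) (h₁.apply_mem hv)
    have hw : p⁻¹ (t₂ (p (t₁ v))) ∉ S.F₁ := by
      rw [hCF _ (inv_mem hp)]
      exact h₂.apply_notMem (S := S.symm) ((hCF p hp _).2 (h₁.apply_mem hv))
    obtain ⟨s, hs, hsu, hsv⟩ := htrans u hu v hv _ hw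
    refine ⟨p * s, mul_mem (hCG hp) hs, ?_, ?_⟩
    · rw [hβ hu, hpu, Perm.mul_apply, hsu]
    · simp only [hβ' hv, Perm.mul_apply, hsv, hpv]
      simp
  intro u v
  by_cases hu : u ∈ S.F₁ <;> by_cases hv : v ∈ S.F₁
  · obtain ⟨p, hp, hpu, hpv⟩ := hpair u hu v hv
    exact ⟨p, hCG hp, by rw [hβ hu, hpu], by rw [hβ hv, hpv]⟩
  · exact hmixed u hu v hv
  · obtain ⟨g, hg, hgv, hgu⟩ := hmixed v hv u hu
    exact ⟨g, hg, hgu, hgv⟩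
  · obtain ⟨p, hp, hpu, hpv⟩ := hpair (t₁ u) (h₁.apply_mem hu) (t₁ v) (h₁.apply_mem hv)
    have ht₁ : t₁ ∈ G := hG ▸ Subgroup.mem_sup_left h₁.1
    have ht₂ : t₂ ∈ G := hG ▸ Subgroup.mem_sup_right h₂.1
    refine ⟨t₂ * p * t₁, mul_mem (mul_mem ht₂ (hCG hp)) ht₁, ?_, ?_⟩
    · rw [hβ' hu, Perm.mul_apply, Perm.mul_apply, hpu]
      rfl
    · rw [hβ' hv, Perm.mul_apply, Perm.mul_apply, hpv]
      rfl

end Extension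

end DihedralPairSetup

/-- If F₂ is a single orbit of the stabilizer G_x (x ∈ F₁), and regular cyclic
groups of squarefree order satisfy the Babai conjugacy (CI^(2)) property, then
R_r^π can be conjugated to R_r by an element of the 2-closure of G. -/
theorem stmt_15 {Ω : Type u} (S : DihedralPairSetup Ω)
    (G : Subgroup (Equiv.Perm Ω)) (hG : G = S.R₁ ⊔ S.R₂)
    (x : Ω) (hx : x ∈ S.F₁)
    (horb : ∃ z₀ : Ω, S.F₂ = {w : Ω | ∃ g ∈ G, g x = x ∧ g z₀ = w})
    (hCI : ∀ (Δ : Type u) (A B : Subgroup (Equiv.Perm Δ)),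
      IsCyclic A → IsCyclic B → Squarefree (Nat.card Δ) →
      (∀ a b : Δ, ∃! g : A, (g : Equiv.Perm Δ) a = b) →
      (∀ a b : Δ, ∃! g : B, (g : Equiv.Perm Δ) a = b) →
      ∃ β ∈ twoClosure (A ⊔ B),
        ∀ g : Equiv.Perm Δ, g ∈ B ↔ β⁻¹ * g * β ∈ A) :
    ∃ β ∈ twoClosure G,
      ∀ g : Equiv.Perm Ω, g ∈ S.R₂ ↔ β⁻¹ * g * β ∈ S.R₁ := by
  obtain ⟨t₁, h₁⟩ := S.exists_isReflection
  obtain ⟨t₂, h₂⟩ := S.symm.exists_isReflection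
  obtain ⟨β₀, hβ₀, hconj, hpair⟩ := S.exists_local_conjugator (hCI S.F₁)
  obtain ⟨β, hβ, hβ'⟩ :=
    Perm.exists_eqOn_eqOn_compl hβ₀ (S.mul_mul_mem_stabilizer h₁ h₂ hβ₀)
  have hcomm : ∀ c ∈ S.C₂, ∃ a ∈ S.C₁, c * β = β * a := fun c hc =>
    let ⟨a, ha, hca⟩ := hconj c hc
    ⟨a, ha, S.mul_eq_mul_of_eqOn h₁ h₂ hβ hβ' hc ha hca⟩
  have hrefl := S.reflection_mul_eq_mul_reflection h₁ h₂ hβ hβ'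
  have htrans := S.exists_mem_fixing_apply_eq (hG ▸ S.hC₁.trans le_sup_left) hx horb
  have : Finite S.R₁ := Nat.finite_of_card_ne_zero (by rw [S.card_R₁]; have := S.k_ge; omega)
  exact ⟨β, S.mem_twoClosure hG h₁ h₂ hβ hβ' htrans hpair,
    Subgroup.conj_mem_iff_of_forall_conj_mem (S.card_R₁.trans S.symm.card_R₁.symm).le
      fun _ => S.conj_mem_R₁ h₁ h₂ hrefl hcomm⟩
end

section
/- Let G = ⟨R_r, R_r^π⟩ (two regular dihedral groups of squarefree order on Ω). Suppose H₁ is a cyclic subgroup of odd order of R_r. Then H₁ has the same orbits on Ω as some subgroup H₂ ≤ R_r^π if and only if the orbits of H₁ form a G-invariant partition of Ω. -/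
/-!
In a dihedral group an odd-order subgroup contains no reflection, so it consists of rotations
and is normal. Hence `R_r` permutes the orbits of `H₁`, and if `H₂ ≤ R_r^π` has the same
orbits then (having the same order, by regularity) it is normal in `R_r^π`, which therefore
permutes these orbits too; so does `G`.

Conversely, if `R_r^π` permutes the `H₁`-orbits, the stabilizer in `R_r^π` of the orbit `B` of
a point acts regularly on `B`, so it has odd order `|B| = |H₁|` and is normal in `R_r^π`.
Since `R_r^π` is transitive, these stabilizers are all conjugate, hence all equal, and this
common stabilizer of every orbit is the required `H₂`.
-/

open Equiv MulAction Subgroup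
open scoped Pointwise

namespace DihedralGroup

theorem normal_of_odd_card {n : ℕ} (H : Subgroup (DihedralGroup n)) (hodd : Odd (Nat.card H)) :
    H.Normal := by
  have sr_not_mem (i : ZMod n) : sr i ∉ H := fun hi => by
    have h2 := H.orderOf_dvd_natCard hi
    rw [orderOf_sr] at h2
    exact Nat.not_even_iff_odd.mpr hodd (even_iff_two_dvd.mpr h2)
  refine ⟨fun a ha g => ?_⟩
  cases a with
  | sr i => exact absurd ha (sr_not_mem i)
  | r i =>
    cases g with
    | r j => simpa [r_mul_r, inv_r, add_comm] using ha
    | sr j => simpa [sr_mul_r, inv_sr, sr_mul_sr, inv_r] using H.inv_mem ha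

end DihedralGroup

theorem Subgroup.le_normalizer_of_odd_card {G : Type*} [Group G] {k : ℕ} {R H : Subgroup G}
    (hHR : H ≤ R) (e : R ≃* DihedralGroup k) (hodd : Odd (Nat.card H)) :
    R ≤ normalizer (H : Set G) := by
  rw [← normal_subgroupOf_iff_le_normalizer hHR]
  have hcard : Nat.card ((H.subgroupOf R).map e.toMonoidHom) = Nat.card H := by
    rw [card_map_of_injective e.injective, Nat.card_congr (subgroupOfEquivOfLe hHR).toEquiv]
  exact (DihedralGroup.normal_of_odd_card _ (hcard ▸ hodd)).of_map_injective e.injective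

section PermutationGroup

variable {Ω : Type*}

theorem exists_mem_apply_eq_iff_mem_orbit (H : Subgroup (Perm Ω)) (x y : Ω) :
    (∃ h ∈ H, h x = y) ↔ y ∈ orbit H x := by
  simp [mem_orbit_iff, Subgroup.smul_def, Perm.smul_def]

namespace Subgroup

variable (H : Subgroup (Perm Ω))

def orbitsStabilizer : Subgroup (Perm Ω) where
  carrier := {g | ∀ x, g • orbit H x = orbit H (g x)}
  one_mem' x := by simp
  mul_mem' {g g'} hg hg' x := by rw [mul_smul, hg', hg]; rfl
  inv_mem' {g} hg x := by
    rw [inv_smul_eq_iff, hg]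
    simp

theorem mem_orbitsStabilizer_iff {g : Perm Ω} :
    g ∈ H.orbitsStabilizer ↔ ∀ x, ∃ z, ⇑g '' orbit H x = orbit H z := by
  refine ⟨fun hg x => ⟨g x, hg x⟩, fun hg x => ?_⟩
  obtain ⟨z, hz⟩ := hg x
  have : g x ∈ orbit H z := hz ▸ Set.mem_image_of_mem g (mem_orbit_self x)
  exact hz.trans (orbit_eq_iff.mpr this).symm

theorem orbitsStabilizer_congr {K : Subgroup (Perm Ω)} (h : ∀ x : Ω, orbit H x = orbit K x) :
    H.orbitsStabilizer = K.orbitsStabilizer := by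
  ext g
  change (∀ x, _) ↔ ∀ x, _
  simp only [h]

theorem normalizer_le_orbitsStabilizer : normalizer (H : Set (Perm Ω)) ≤ H.orbitsStabilizer := by
  have smul_orbit_subset {g} (hg : g ∈ normalizer (H : Set (Perm Ω))) (x : Ω) :
      g • orbit H x ⊆ orbit H (g x) := by
    rintro _ ⟨_, ⟨h, rfl⟩, rfl⟩
    exact ⟨⟨g * h * g⁻¹, (mem_normalizer_iff.mp hg h).mp h.2⟩, by simp [Subgroup.smul_def]⟩
  intro g hg x
  refine (smul_orbit_subset hg x).antisymm ?_
  rw [Set.subset_smul_set_iff]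
  simpa using smul_orbit_subset (inv_mem hg) (g x)

end Subgroup

section Regular

variable {R : Subgroup (Perm Ω)}

theorem card_orbit_of_regular (hreg : ∀ x y : Ω, ∃! g : R, (g : Perm Ω) x = y)
    {K : Subgroup (Perm Ω)} (hKR : K ≤ R) (x : Ω) : Nat.card (orbit K x) = Nat.card K := by
  refine (Nat.card_eq_of_bijective (fun h : K => (⟨h • x, mem_orbit x h⟩ : orbit K x))
    ⟨fun a b hab => ?_, ?_⟩).symm
  · have := congrArg Subtype.val <| (hreg x (a • x)).unique (y₁ := ⟨a, hKR a.2⟩)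
      (y₂ := ⟨b, hKR b.2⟩) rfl (congrArg Subtype.val hab).symm
    exact Subtype.ext this
  · rintro ⟨_, h, rfl⟩
    exact ⟨h, rfl⟩

end Regular

theorem sup_le_orbitsStabilizer_of_orbit_eq [Nonempty Ω] {k₁ k₂ : ℕ}
    {R₁ R₂ H₁ H₂ : Subgroup (Perm Ω)}
    (hreg₁ : ∀ x y : Ω, ∃! g : R₁, (g : Perm Ω) x = y) (e₁ : R₁ ≃* DihedralGroup k₁)
    (hreg₂ : ∀ x y : Ω, ∃! g : R₂, (g : Perm Ω) x = y) (e₂ : R₂ ≃* DihedralGroup k₂)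
    (hH₁ : H₁ ≤ R₁) (hH₂ : H₂ ≤ R₂) (hodd : Odd (Nat.card H₁))
    (horbit : ∀ x : Ω, orbit H₁ x = orbit H₂ x) :
    R₁ ⊔ R₂ ≤ H₁.orbitsStabilizer := by
  obtain ⟨x⟩ := ‹Nonempty Ω›
  have hcard : Nat.card H₂ = Nat.card H₁ := by
    rw [← card_orbit_of_regular hreg₂ hH₂ x, ← horbit, card_orbit_of_regular hreg₁ hH₁ x]
  refine sup_le ?_ ?_
  · exact (le_normalizer_of_odd_card hH₁ e₁ hodd).trans H₁.normalizer_le_orbitsStabilizer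
  · rw [H₁.orbitsStabilizer_congr horbit]
    exact (le_normalizer_of_odd_card hH₂ e₂ (hcard ▸ hodd)).trans
      H₂.normalizer_le_orbitsStabilizer

theorem exists_le_orbit_eq_of_le_orbitsStabilizer [Nonempty Ω] {k : ℕ}
    {R H : Subgroup (Perm Ω)} (hreg : ∀ x y : Ω, ∃! g : R, (g : Perm Ω) x = y)
    (e : R ≃* DihedralGroup k) (hRH : R ≤ H.orbitsStabilizer)
    (hodd : ∀ x : Ω, Odd (Nat.card (orbit H x))) :
    ∃ H₂ ≤ R, ∀ x : Ω, orbit H x = orbit H₂ x := by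
  let K (x : Ω) : Subgroup (Perm Ω) := R ⊓ stabilizer (Perm Ω) (orbit H x)
  have orbit_K (x : Ω) : orbit (K x) x = orbit H x := by
    refine Set.Subset.antisymm ?_ fun y hy => ?_
    · rintro _ ⟨g, rfl⟩
      rw [← g.2.2]
      exact Set.smul_mem_smul_set (mem_orbit_self x)
    · obtain ⟨u, rfl, -⟩ := hreg x y
      have : u.1 ∈ stabilizer (Perm Ω) (orbit H x) := by
        rw [mem_stabilizer_iff, hRH u.2 x, orbit_eq_iff.mpr hy]
      exact ⟨⟨u, u.2, this⟩, rfl⟩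
  have normal_K (x : Ω) : R ≤ normalizer (K x : Set (Perm Ω)) := by
    refine le_normalizer_of_odd_card inf_le_left e ?_
    rw [← card_orbit_of_regular hreg inf_le_left x, orbit_K]
    exact hodd x
  have K_le (x w : Ω) : K x ≤ K w := by
    intro g hg
    obtain ⟨a, rfl, -⟩ := hreg x w
    have hconj : a.1⁻¹ * g * a ∈ K x := (mem_normalizer_iff''.mp (normal_K x a.2) g).mp hg
    refine ⟨hg.1, show g ∈ stabilizer (Perm Ω) _ from ?_⟩
    rw [mem_stabilizer_iff, ← hRH a.2 x]
    calc g • a.1 • orbit H x = a.1 • (a.1⁻¹ * g * a) • orbit H x := by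
          simp only [mul_smul, smul_inv_smul]
      _ = a.1 • orbit H x := by rw [hconj.2]
  obtain ⟨x₀⟩ := ‹Nonempty Ω›
  refine ⟨K x₀, inf_le_left, fun w => ?_⟩
  rw [le_antisymm (K_le x₀ w) (K_le w x₀), orbit_K]

end PermutationGroup

theorem stmt_17_general {Ω : Type*} (S : DihedralPairSetup Ω)
    (G : Subgroup (Equiv.Perm Ω)) (hG : G = S.R₁ ⊔ S.R₂)
    (H₁ : Subgroup (Equiv.Perm Ω)) (hH₁ : H₁ ≤ S.R₁)
    (hodd : Odd (Nat.card H₁)) :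
    (∃ H₂ : Subgroup (Equiv.Perm Ω), H₂ ≤ S.R₂ ∧
        ∀ x y : Ω, (∃ h ∈ H₁, h x = y) ↔ (∃ h ∈ H₂, h x = y)) ↔
    (∀ g ∈ G, ∀ x : Ω, ∃ z : Ω,
        (⇑g) '' {y : Ω | ∃ h ∈ H₁, h x = y} = {y : Ω | ∃ h ∈ H₁, h z = y}) := by
  have : Nonempty Ω := (Nat.card_pos_iff.mp (by have := S.card_eq; have := S.k_ge; omega)).1
  obtain ⟨e₁⟩ := S.dih₁
  obtain ⟨e₂⟩ := S.dih₂
  simp only [exists_mem_apply_eq_iff_mem_orbit, ← Set.ext_iff, Set.ofPred_mem_eq,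
    ← Subgroup.mem_orbitsStabilizer_iff, hG]
  constructor
  · rintro ⟨H₂, hH₂, horbit⟩
    exact sup_le_orbitsStabilizer_of_orbit_eq S.reg₁ e₁ S.reg₂ e₂ hH₁ hH₂ hodd horbit
  · intro hle
    refine exists_le_orbit_eq_of_le_orbitsStabilizer S.reg₂ e₂
      (fun g hg => hle g (le_sup_right (a := S.R₁) hg)) fun x => ?_
    rwa [card_orbit_of_regular S.reg₁ hH₁]

/-- A cyclic subgroup H₁ ≤ R_r of odd order has the same orbits as some
subgroup H₂ ≤ R_r^π if and only if the orbits of H₁ form a G-invariant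
partition of Ω. -/
theorem stmt_17 {Ω : Type*} [Fintype Ω] (S : DihedralPairSetup Ω)
    (G : Subgroup (Equiv.Perm Ω)) (hG : G = S.R₁ ⊔ S.R₂)
    (H₁ : Subgroup (Equiv.Perm Ω)) (hH₁ : H₁ ≤ S.R₁)
    (hcyc : IsCyclic H₁) (hodd : Odd (Nat.card H₁)) :
    (∃ H₂ : Subgroup (Equiv.Perm Ω), H₂ ≤ S.R₂ ∧
        ∀ x y : Ω, (∃ h ∈ H₁, h x = y) ↔ (∃ h ∈ H₂, h x = y)) ↔
    (∀ g ∈ G, ∀ x : Ω, ∃ z : Ω,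
        (⇑g) '' {y : Ω | ∃ h ∈ H₁, h x = y} = {y : Ω | ∃ h ∈ H₁, h z = y}) :=
  stmt_17_general S G hG H₁ hH₁ hodd
end

section
/- Let R be a finite group with right-regular representation R_r ≤ Sym(R). Suppose that for every π ∈ Sym(R), the subgroups R_r and R_r^π = π^{-1}R_rπ are conjugate within the 2-closure ⟨R_r, R_r^π⟩^(2). Then every Cayley colour digraph on R has the CI property: whenever two Cayley colour digraphs on R are isomorphic, they are isomorphic via a group automorphism of R. -/
/-! Right translations are automorphisms of every Cayley colour digraph, so if `e` is an
isomorphism between two Cayley colour digraphs on `R`, the automorphism group of the target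
contains both `R_r` and `e R_r e⁻¹`. Automorphism groups of colour digraphs are 2-closed, so
the element `δ` conjugating `e R_r e⁻¹` back to `R_r` is an automorphism of the target as well.
Hence `δ⁻¹ e` is an isomorphism normalizing `R_r`; after a right translation it fixes `1`, and
a permutation fixing `1` and normalizing `R_r` is a group automorphism. A group automorphism
which is a Cayley isomorphism maps each connection set onto the corresponding one. -/

/-- The right-regular representation of R in Sym(R): g acts by right
multiplication (as a homomorphism, g ↦ (x ↦ x * g⁻¹)); its range is the
right-regular subgroup R_r of Sym(R). -/
def rightRegularHom (R : Type*) [Group R] : R →* Equiv.Perm R where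
  toFun g := Equiv.mulRight g⁻¹
  map_one' := by ext x; simp
  map_mul' a b := by ext x; simp [mul_assoc]

lemma rightRegularHom_apply {R : Type*} [Group R] (g x : R) :
    rightRegularHom R g x = x * g⁻¹ := rfl

lemma Subgroup.mul_inv_mem_normalizer_of_comap_conj_iff {G : Type*} [Group G]
    {H : Subgroup G} {π δ : G}
    (h : ∀ g, g ∈ H.comap (MulAut.conj π).toMonoidHom ↔ δ⁻¹ * g * δ ∈ H) :
    δ⁻¹ * π⁻¹ ∈ Subgroup.normalizer (H : Set G) := by
  rw [Subgroup.mem_normalizer_iff]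
  intro n
  have hn : n ∈ H ↔ π⁻¹ * n * π ∈ H.comap (MulAut.conj π).toMonoidHom := by
    simp [MulAut.conj_apply, mul_assoc]
  rw [hn, h]
  simp only [mul_inv_rev, inv_inv, mul_assoc]

section Cayley

variable {R : Type*} [Group R] {Colour : Type*}

def IsCayleyArc (S : Set R) (a b : R) : Prop := ∃ s ∈ S, b = s * a

lemma isCayleyArc_iff {S : Set R} {a b : R} : IsCayleyArc S a b ↔ b * a⁻¹ ∈ S := by
  refine ⟨fun ⟨s, hs, h⟩ => ?_, fun h => ⟨_, h, (inv_mul_cancel_right b a).symm⟩⟩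
  rwa [h, mul_inv_cancel_right]

lemma isCayleyArc_mul_right {S : Set R} {a b : R} (r : R) :
    IsCayleyArc S (a * r) (b * r) ↔ IsCayleyArc S a b := by
  simp [isCayleyArc_iff, mul_assoc]

def IsCayleyIso (S T : Colour → Set R) (f : R → R) : Prop :=
  ∀ c a b, IsCayleyArc (S c) a b ↔ IsCayleyArc (T c) (f a) (f b)

namespace IsCayleyIso

variable {S T U : Colour → Set R}

lemma comp {f g : R → R} (hf : IsCayleyIso S T f) (hg : IsCayleyIso T U g) :
    IsCayleyIso S U (g ∘ f) :=
  fun c a b => (hf c a b).trans (hg c (f a) (f b))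

lemma symm {e : R ≃ R} (he : IsCayleyIso S T e) : IsCayleyIso T S e.symm := by
  intro c a b
  simpa using (he c (e.symm a) (e.symm b)).symm

lemma mulRight (S : Colour → Set R) (r : R) : IsCayleyIso S S (· * r) :=
  fun _ _ _ => (isCayleyArc_mul_right r).symm

lemma image_eq {f : R ≃* R} (hf : IsCayleyIso S T f) (c : Colour) : f '' S c = T c := by
  have hpre : S c = f ⁻¹' T c := by
    ext s
    simpa [isCayleyArc_iff] using hf c 1 s
  rw [hpre, Set.image_preimage_eq _ f.surjective]

end IsCayleyIso

def cayleyAut (T : Colour → Set R) : Subgroup (Equiv.Perm R) where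
  carrier := {g | IsCayleyIso T T g}
  one_mem' _ _ _ := Iff.rfl
  mul_mem' hx hy := hy.comp hx
  inv_mem' hx := IsCayleyIso.symm hx

lemma mem_cayleyAut {T : Colour → Set R} {g : Equiv.Perm R} :
    g ∈ cayleyAut T ↔ IsCayleyIso T T g := Iff.rfl

lemma rightRegularHom_range_le_cayleyAut (T : Colour → Set R) :
    (rightRegularHom R).range ≤ cayleyAut T := by
  rintro _ ⟨r, rfl⟩
  exact IsCayleyIso.mulRight T r⁻¹

lemma comap_conj_cayleyAut_le {S T : Colour → Set R} {e : R ≃ R} (he : IsCayleyIso S T e) :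
    (cayleyAut S).comap (MulAut.conj e.symm).toMonoidHom ≤ cayleyAut T := by
  intro g hg
  have hconj : IsCayleyIso T T (e ∘ (e.symm * g * e.symm⁻¹) ∘ e.symm) :=
    (he.symm.comp hg).comp he
  simpa [Function.comp_def, mem_cayleyAut] using hconj

lemma twoClosure_subset_cayleyAut {T : Colour → Set R} {G : Subgroup (Equiv.Perm R)}
    (hG : G ≤ cayleyAut T) : twoClosure G ⊆ cayleyAut T := by
  intro β hβ c a b
  obtain ⟨g, hg, hga, hgb⟩ := hβ a b
  rw [hga, hgb]
  exact hG hg c a b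

/-- Conjugation by `φ` sends `ρ(y⁻¹) = (· * y)` to some `ρ(u)`, so `φ (x * y) = φ x * u⁻¹`;
taking `x = 1` identifies `u⁻¹` with `φ y`. -/
lemma map_mul_of_mem_normalizer {φ : Equiv.Perm R}
    (hφ : φ ∈ Subgroup.normalizer ((rightRegularHom R).range : Set (Equiv.Perm R)))
    (h1 : φ 1 = 1) (x y : R) :
    φ (x * y) = φ x * φ y := by
  obtain ⟨u, hu⟩ := (hφ (rightRegularHom R y⁻¹)).mp ⟨y⁻¹, rfl⟩
  have htrans : ∀ w, φ (w * y) = φ w * u⁻¹ := by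
    intro w
    have := congrArg (· (φ w)) hu
    simp only [Equiv.Perm.mul_apply, Equiv.Perm.coe_inv, Equiv.symm_apply_apply,
      rightRegularHom_apply, inv_inv] at this
    exact this.symm
  have hy : φ y = u⁻¹ := by simpa [h1] using htrans 1
  rw [htrans, hy]

lemma exists_mulEquiv_isCayleyIso {S T : Colour → Set R} {φ : Equiv.Perm R}
    (hφ : φ ∈ Subgroup.normalizer ((rightRegularHom R).range : Set (Equiv.Perm R)))
    (hiso : IsCayleyIso S T φ) :
    ∃ ψ : R ≃* R, IsCayleyIso S T ψ := by
  set ψ := rightRegularHom R (φ 1) * φ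
  have hψ : ψ ∈ Subgroup.normalizer ((rightRegularHom R).range : Set (Equiv.Perm R)) :=
    mul_mem (Subgroup.le_normalizer ⟨φ 1, rfl⟩) hφ
  have hψ1 : ψ 1 = 1 := mul_inv_cancel (φ 1)
  exact ⟨MulEquiv.mk' ψ (map_mul_of_mem_normalizer hψ hψ1),
    hiso.comp (IsCayleyIso.mulRight T (φ 1)⁻¹)⟩

end Cayley

theorem stmt_19_general (R : Type*) [Group R]
    (hyp : ∀ π : Equiv.Perm R,
      ∃ δ ∈ twoClosure ((rightRegularHom R).range ⊔
          Subgroup.comap (MulAut.conj π).toMonoidHom (rightRegularHom R).range),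
        ∀ g : Equiv.Perm R,
          g ∈ Subgroup.comap (MulAut.conj π).toMonoidHom (rightRegularHom R).range ↔
            δ⁻¹ * g * δ ∈ (rightRegularHom R).range) :
    ∀ (Colour : Type*) (Sc Tc : Colour → Set R),
      (∃ e : R ≃ R, ∀ (c : Colour) (a b : R),
        (∃ s ∈ Sc c, b = s * a) ↔ (∃ t ∈ Tc c, e b = t * e a)) →
      ∃ δ : R ≃* R, ∀ c : Colour, (fun x => δ x) '' Sc c = Tc c := by
  intro Colour Sc Tc ⟨e, he⟩
  have hiso : IsCayleyIso Sc Tc e := he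
  obtain ⟨δ, hδ, hconj⟩ := hyp e.symm
  have hδaut : δ ∈ cayleyAut Tc := twoClosure_subset_cayleyAut
    (sup_le (rightRegularHom_range_le_cayleyAut Tc)
      ((Subgroup.comap_mono (rightRegularHom_range_le_cayleyAut Sc)).trans
        (comap_conj_cayleyAut_le hiso))) hδ
  have hφiso : IsCayleyIso Sc Tc (δ⁻¹ * e.symm⁻¹ : Equiv.Perm R) :=
    hiso.comp ((cayleyAut Tc).inv_mem hδaut)
  obtain ⟨ψ, hψ⟩ := exists_mulEquiv_isCayleyIso
    (Subgroup.mul_inv_mem_normalizer_of_comap_conj_iff hconj) hφiso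
  exact ⟨ψ, hψ.image_eq⟩

/-- Babai-type criterion: if for every π ∈ Sym(R) the groups R_r and
R_r^π = π⁻¹R_rπ are conjugate within the 2-closure of ⟨R_r, R_r^π⟩, then R is
a CI^(2) group: any two isomorphic Cayley colour digraphs on R are isomorphic
via a group automorphism of R. -/
theorem stmt_19 (R : Type*) [Group R] [Fintype R]
    (hyp : ∀ π : Equiv.Perm R,
      ∃ δ ∈ twoClosure ((rightRegularHom R).range ⊔
          Subgroup.comap (MulAut.conj π).toMonoidHom (rightRegularHom R).range),
        ∀ g : Equiv.Perm R,
          g ∈ Subgroup.comap (MulAut.conj π).toMonoidHom (rightRegularHom R).range ↔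
            δ⁻¹ * g * δ ∈ (rightRegularHom R).range) :
    ∀ (Colour : Type*) (Sc Tc : Colour → Set R),
      (∃ e : R ≃ R, ∀ (c : Colour) (a b : R),
        (∃ s ∈ Sc c, b = s * a) ↔ (∃ t ∈ Tc c, e b = t * e a)) →
      ∃ δ : R ≃* R, ∀ c : Colour, (fun x => δ x) '' Sc c = Tc c :=
  stmt_19_general R hyp
end
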